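/- arXiv:2401.15678 — 7 statements merged into one kernel-verified Lean document; each statement's English description precedes it below -/
import Mathlib

section
/- Let C be an [n,k,d] binary linear code containing the all-ones vector, with k ≥ 2, and let C_sub be a (k-1)-dimensional subcode of C not containing the all-ones vector, with basis g_1,...,g_{k-1}; set g_0 to be the all-ones vector. For 0 ≤ r ≤ m define C^{⊗[r,m]} as the span of all Kronecker products g_{j_0} ⊗ g_{j_1} ⊗ ... ⊗ g_{j_{m-1}} over tuples j ∈ {0,...,k-1}^m with Hamming weight wt(j) ≤ r. Then the dimension of C^{⊗[r,m]} equals ∑_{l=0}^{r} binomial(m,l)·(k-1)^l. -/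
/-- The all-ones vector in `𝔽₂ⁿ`. -/
def allOnes (n : ℕ) : Fin n → ZMod 2 := fun _ => 1

/-- The Kronecker product `g_{j₀} ⊗ ⋯ ⊗ g_{j_{m-1}}`, with coordinates of `𝔽₂^{nᵐ}`
indexed by tuples `i ∈ {0,…,n-1}ᵐ`: its `i`-th entry is `∏_ℓ g_{j_ℓ, i_ℓ}`. -/
def bvec {n k : ℕ} {ι : Type} [Fintype ι] (g : Fin k → Fin n → ZMod 2)
    (j : ι → Fin k) : (ι → Fin n) → ZMod 2 :=
  fun i => ∏ ℓ, g (j ℓ) (i ℓ)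

/-- The recursive subproduct code `C^{⊗[r,m]}`: span of all `b_j` with `wt(j) ≤ r`. -/
def subprod (n k : ℕ) [NeZero k] (r : ℕ) (ι : Type) [Fintype ι] [DecidableEq ι]
    (g : Fin k → Fin n → ZMod 2) : Submodule (ZMod 2) ((ι → Fin n) → ZMod 2) :=
  Submodule.span (ZMod 2)
    {c | ∃ j : ι → Fin k, (Finset.univ.filter fun ℓ => j ℓ ≠ 0).card ≤ r ∧ c = bvec g j}

/-- Kronecker product `d ⊗ a` of `d ∈ 𝔽₂^{nᵐ}` with `a ∈ 𝔽₂ⁿ`. -/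
def tens2 {n m : ℕ} (d : (Fin m → Fin n) → ZMod 2) (a : Fin n → ZMod 2) :
    (Fin (m + 1) → Fin n) → ZMod 2 :=
  fun i => d (Fin.init i) * a (i (Fin.last m))

open Finset in
lemma dual_exists {n k : ℕ} (g : Fin k → Fin n → ZMod 2)
    (hg : LinearIndependent (ZMod 2) g) :
    ∃ φ : Fin k → ((Fin n → ZMod 2) →ₗ[ZMod 2] ZMod 2),
      ∀ i j, φ i (g j) = if i = j then 1 else 0 := by
  classical
  obtain ⟨q, hq⟩ := Submodule.exists_isCompl (Submodule.span (ZMod 2) (Set.range g))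
  let b := Module.Basis.span hg
  refine ⟨fun i => (b.coord i) ∘ₗ (Submodule.projectionOnto _ q hq), fun i j => ?_⟩
  have hm : g j ∈ Submodule.span (ZMod 2) (Set.range g) := Submodule.subset_span ⟨j, rfl⟩
  have h1 : (Submodule.projectionOnto _ q hq) (g j) = b j := by
    have := Submodule.projectionOnto_apply_left hq ⟨g j, hm⟩
    have hbj : (b j : Fin n → ZMod 2) = g j := congrArg Subtype.val (Module.Basis.span_apply hg j)
    rw [show g j = ((⟨g j, hm⟩ : Submodule.span (ZMod 2) (Set.range g)) : Fin n → ZMod 2) from rfl,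
      this]
    exact Subtype.ext hbj.symm
  simp only [LinearMap.comp_apply, h1, Module.Basis.coord_apply, Module.Basis.repr_self,
    Finsupp.single_apply]
  simp [eq_comm]

open Finset in
lemma bvec_linearIndependent {n k m : ℕ} (g : Fin k → Fin n → ZMod 2)
    (hg : LinearIndependent (ZMod 2) g) :
    LinearIndependent (ZMod 2) (fun j : Fin m → Fin k => bvec g j) := by
  classical
  obtain ⟨φ, hφ⟩ := dual_exists g hg
  set c : Fin k → Fin n → ZMod 2 := fun i y => φ i (Pi.single y 1) with hc
  have hsum : ∀ i j, (∑ y, g j y * c i y) = if i = j then 1 else 0 := by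
    intro i j
    rw [← hφ i j]
    have hdec : g j = ∑ y, g j y • Pi.single y (1 : ZMod 2) := by
      ext x
      simp [Pi.single_apply]
    conv_rhs => rw [hdec]
    rw [map_sum]
    simp [smul_eq_mul, hc]
  rw [Fintype.linearIndependent_iff]
  intro a ha J
  have key : ∀ x : Fin m → Fin n, (∑ j, a j * bvec g j x) = 0 := by
    intro x
    have := congrFun ha x
    simpa using this
  have step1 : a J = ∑ j : Fin m → Fin k, a j * ∏ ℓ, (if J ℓ = j ℓ then (1 : ZMod 2) else 0) := by
    rw [show ∑ j : Fin m → Fin k, a j * ∏ ℓ, (if J ℓ = j ℓ then (1 : ZMod 2) else 0)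
        = ∑ j : Fin m → Fin k, a j * (if J = j then 1 else 0) from ?_]
    · simp
    · refine Finset.sum_congr rfl fun j _ => ?_
      congr 1
      by_cases h : J = j
      · subst h; simp
      · rw [if_neg h]
        obtain ⟨ℓ, hℓ⟩ := Function.ne_iff.1 h
        exact Finset.prod_eq_zero (mem_univ ℓ) (by simp [hℓ])
  have step2 : ∀ j : Fin m → Fin k,
      (∏ ℓ, (if J ℓ = j ℓ then (1 : ZMod 2) else 0))
        = ∑ x : Fin m → Fin n, ∏ ℓ, (g (j ℓ) (x ℓ) * c (J ℓ) (x ℓ)) := by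
    intro j
    have := Finset.prod_univ_sum (fun _ : Fin m => (univ : Finset (Fin n)))
      (fun ℓ y => g (j ℓ) y * c (J ℓ) y)
    rw [show (∑ x : Fin m → Fin n, ∏ ℓ, (g (j ℓ) (x ℓ) * c (J ℓ) (x ℓ)))
        = ∑ x ∈ Fintype.piFinset fun _ : Fin m => (univ : Finset (Fin n)),
            ∏ ℓ, (g (j ℓ) (x ℓ) * c (J ℓ) (x ℓ)) by simp, ← this]
    refine Finset.prod_congr rfl fun ℓ _ => ?_
    rw [hsum (J ℓ) (j ℓ)]
  calc a J = ∑ j : Fin m → Fin k, a j *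
        ∑ x : Fin m → Fin n, ∏ ℓ, (g (j ℓ) (x ℓ) * c (J ℓ) (x ℓ)) := by
        rw [step1]; exact Finset.sum_congr rfl fun j _ => by rw [step2 j]
    _ = ∑ x : Fin m → Fin n, ∑ j : Fin m → Fin k,
          (∏ ℓ, c (J ℓ) (x ℓ)) * (a j * bvec g j x) := by
        simp_rw [Finset.mul_sum, Finset.prod_mul_distrib]
        rw [Finset.sum_comm]
        refine Finset.sum_congr rfl fun x _ => Finset.sum_congr rfl fun j _ => ?_
        show a j * ((∏ ℓ, g (j ℓ) (x ℓ)) * ∏ ℓ, c (J ℓ) (x ℓ)) = _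
        show _ = (∏ ℓ, c (J ℓ) (x ℓ)) * (a j * ∏ ℓ, g (j ℓ) (x ℓ))
        ring
    _ = ∑ x : Fin m → Fin n, (∏ ℓ, c (J ℓ) (x ℓ)) * ∑ j, a j * bvec g j x := by
        simp_rw [Finset.mul_sum]
    _ = 0 := by simp [key]

open Finset in
lemma card_exact (m k l : ℕ) [NeZero k] :
    ((univ : Finset (Fin m → Fin k)).filter
        fun j => (univ.filter fun ℓ => j ℓ ≠ 0).card = l).card = m.choose l * (k-1)^l := by
  classical
  rw [Finset.card_eq_sum_card_fiberwise
    (f := fun j : Fin m → Fin k => univ.filter fun ℓ => j ℓ ≠ 0)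
    (t := Finset.powersetCard l (univ : Finset (Fin m)))
    (fun x hx => by
      simp only [mem_coe, mem_filter, mem_powersetCard] at hx ⊢
      exact ⟨subset_univ _, hx.2⟩)]
  have hfib : ∀ s ∈ Finset.powersetCard l (univ : Finset (Fin m)),
      (((univ : Finset (Fin m → Fin k)).filter
          fun j => (univ.filter fun ℓ => j ℓ ≠ 0).card = l).filter
        fun j => (univ.filter fun ℓ => j ℓ ≠ 0) = s).card = (k-1)^l := by
    intro s hs
    rw [mem_powersetCard] at hs
    have hset : (((univ : Finset (Fin m → Fin k)).filter
          fun j => (univ.filter fun ℓ => j ℓ ≠ 0).card = l).filter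
        fun j => (univ.filter fun ℓ => j ℓ ≠ 0) = s)
        = Fintype.piFinset (fun i : Fin m =>
            if i ∈ s then (univ : Finset (Fin k)).filter (· ≠ 0) else {0}) := by
      ext j
      simp only [Fintype.mem_piFinset, mem_filter, mem_univ, true_and]
      constructor
      · rintro ⟨hcard, hsupp⟩ i
        by_cases hi : i ∈ s
        · rw [if_pos hi]
          rw [← hsupp] at hi
          simpa using (mem_filter.1 hi).2
        · rw [if_neg hi, mem_singleton]
          rw [← hsupp] at hi
          by_contra h
          exact hi (mem_filter.2 ⟨mem_univ i, h⟩)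
      · intro h
        have hsupp : (univ.filter fun ℓ => j ℓ ≠ 0) = s := by
          ext i
          simp only [mem_filter, mem_univ, true_and]
          constructor
          · intro hne
            by_contra hi
            have := h i
            rw [if_neg hi, mem_singleton] at this
            exact hne this
          · intro hi
            have := h i
            rw [if_pos hi, mem_filter] at this
            exact this.2
        exact ⟨by rw [hsupp, hs.2], hsupp⟩
    rw [hset, Fintype.card_piFinset]
    have : ∀ i : Fin m, (if i ∈ s then (univ : Finset (Fin k)).filter (· ≠ 0) else {0}).card
        = if i ∈ s then k - 1 else 1 := by
      intro i
      by_cases hi : i ∈ s <;> simp [hi, Finset.filter_ne', Finset.card_erase_of_mem]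
    simp_rw [this]
    rw [Finset.prod_ite_mem, univ_inter, Finset.prod_const, hs.2]
  rw [Finset.sum_congr rfl hfib, Finset.sum_const, Finset.card_powersetCard, card_univ,
    Fintype.card_fin, smul_eq_mul]

open Finset in
lemma card_le (m k r : ℕ) [NeZero k] :
    ((univ : Finset (Fin m → Fin k)).filter
        fun j => (univ.filter fun ℓ => j ℓ ≠ 0).card ≤ r).card
      = ∑ l ∈ Finset.range (r+1), m.choose l * (k-1)^l := by
  classical
  rw [Finset.card_eq_sum_card_fiberwise
    (f := fun j : Fin m → Fin k => (univ.filter fun ℓ => j ℓ ≠ 0).card)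
    (t := Finset.range (r+1))
    (fun x hx => by simp only [mem_coe, mem_filter] at hx; simp [Nat.lt_succ_iff, hx.2])]
  refine Finset.sum_congr rfl fun l hl => ?_
  rw [mem_range, Nat.lt_succ_iff] at hl
  rw [← card_exact m k l]
  congr 1
  ext j
  simp only [mem_filter, mem_univ, true_and]
  constructor
  · rintro ⟨_, h⟩; exact h
  · intro h; exact ⟨h ▸ hl, h⟩

theorem stmt0 (n k : ℕ) [NeZero k] (hk : 2 ≤ k)
    (C Csub : Submodule (ZMod 2) (Fin n → ZMod 2))
    (hC1 : allOnes n ∈ C) (hCk : Module.finrank (ZMod 2) C = k)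
    (hsub : Csub ≤ C) (hsubdim : Module.finrank (ZMod 2) Csub = k - 1)
    (hsub1 : allOnes n ∉ Csub)
    (g : Fin k → Fin n → ZMod 2) (hg0 : g 0 = allOnes n)
    (hgsub : ∀ i, i ≠ 0 → g i ∈ Csub)
    (hgind : LinearIndependent (ZMod 2) (fun i : {i : Fin k // i ≠ 0} => g i.1))
    (m r : ℕ) (hr : r ≤ m) :
    Module.finrank (ZMod 2) (subprod n k r (Fin m) g) =
      ∑ l ∈ Finset.range (r + 1), Nat.choose m l * (k - 1) ^ l := by
  classical
  -- full linear independence of g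
  have hgfull : LinearIndependent (ZMod 2) g := by
    let e : Option {i : Fin k // i ≠ 0} ≃ Fin k := Equiv.optionSubtypeNe 0
    have hopt : LinearIndependent (ZMod 2) (g ∘ e) := by
      rw [linearIndependent_option]
      constructor
      · exact hgind
      · show g 0 ∉ _
        rw [hg0]
        intro hmem
        apply hsub1
        refine Submodule.span_le.2 ?_ hmem
        rintro _ ⟨i, rfl⟩
        exact hgsub i.1 i.2
    exact (linearIndependent_equiv e).1 hopt
  have hres : LinearIndependent (ZMod 2)
      (fun j : {j : Fin m → Fin k // (Finset.univ.filter fun ℓ => j ℓ ≠ 0).card ≤ r} =>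
        bvec g j.1) :=
    (bvec_linearIndependent g hgfull).comp Subtype.val Subtype.val_injective
  have hset : {c | ∃ j : Fin m → Fin k,
        (Finset.univ.filter fun ℓ => j ℓ ≠ 0).card ≤ r ∧ c = bvec g j}
      = Set.range (fun j : {j : Fin m → Fin k //
          (Finset.univ.filter fun ℓ => j ℓ ≠ 0).card ≤ r} => bvec g j.1) := by
    ext c
    constructor
    · rintro ⟨j, hj, rfl⟩; exact ⟨⟨j, hj⟩, rfl⟩
    · rintro ⟨⟨j, hj⟩, rfl⟩; exact ⟨j, hj, rfl⟩
  rw [subprod, hset, finrank_span_eq_card hres, Fintype.card_subtype]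
  convert card_le m k r using 2
end

section
/- For 1 ≤ r ≤ m-1, the code C^{⊗[r,m]} admits the recursive Plotkin-like decomposition C^{⊗[r,m]} = { ∑_{i=0}^{k-1} d_i ⊗ g_i : d_0 ∈ C^{⊗[r,m-1]}, d_i ∈ C^{⊗[r-1,m-1]} for 1 ≤ i ≤ k-1 }. -/
lemma tens2_zero {n m : ℕ} (a : Fin n → ZMod 2) :
    tens2 (0 : (Fin m → Fin n) → ZMod 2) a = 0 := by
  funext i; simp [tens2]

lemma tens2_add {n m : ℕ} (d d' : (Fin m → Fin n) → ZMod 2) (a : Fin n → ZMod 2) :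
    tens2 (d + d') a = tens2 d a + tens2 d' a := by
  funext i; simp [tens2, add_mul]

lemma tens2_smul {n m : ℕ} (c : ZMod 2) (d : (Fin m → Fin n) → ZMod 2)
    (a : Fin n → ZMod 2) :
    tens2 (c • d) a = c • tens2 d a := by
  funext i; simp [tens2, mul_assoc]

lemma bvec_snoc {n k m : ℕ} (g : Fin k → Fin n → ZMod 2) (j' : Fin m → Fin k)
    (a : Fin k) :
    bvec g (Fin.snoc j' a) = tens2 (bvec g j') (g a) := by
  funext i
  simp [bvec, tens2, Fin.prod_univ_castSucc, Fin.init]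

lemma wt_snoc {k m : ℕ} [NeZero k] (j' : Fin m → Fin k) (a : Fin k) :
    (Finset.univ.filter fun ℓ => (Fin.snoc j' a : Fin (m + 1) → Fin k) ℓ ≠ 0).card
      = (Finset.univ.filter fun ℓ => j' ℓ ≠ 0).card + if a ≠ 0 then 1 else 0 := by
  rw [Finset.card_filter, Finset.card_filter, Fin.sum_univ_castSucc]
  simp

lemma tens2_mem_subprod (n k : ℕ) [NeZero k] (g : Fin k → Fin n → ZMod 2)
    {m r r' : ℕ} (a : Fin k) (hcond : r' + (if a ≠ 0 then 1 else 0) ≤ r)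
    {x : (Fin m → Fin n) → ZMod 2} (hx : x ∈ subprod n k r' (Fin m) g) :
    tens2 x (g a) ∈ subprod n k r (Fin (m + 1)) g := by
  induction hx using Submodule.span_induction with
  | mem x hx =>
    obtain ⟨j', hw, rfl⟩ := hx
    rw [← bvec_snoc]
    apply Submodule.subset_span
    refine ⟨Fin.snoc j' a, ?_, rfl⟩
    rw [wt_snoc]
    split_ifs at hcond ⊢ <;> omega
  | zero => rw [tens2_zero]; exact zero_mem _
  | add x y hx hy ihx ihy => rw [tens2_add]; exact add_mem ihx ihy
  | smul c x hx ih => rw [tens2_smul]; exact Submodule.smul_mem _ _ ih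

theorem stmt2 (n k : ℕ) [NeZero k] (hk : 2 ≤ k)
    (C Csub : Submodule (ZMod 2) (Fin n → ZMod 2))
    (hC1 : allOnes n ∈ C) (hCk : Module.finrank (ZMod 2) C = k)
    (hsub : Csub ≤ C) (hsubdim : Module.finrank (ZMod 2) Csub = k - 1)
    (hsub1 : allOnes n ∉ Csub)
    (g : Fin k → Fin n → ZMod 2) (hg0 : g 0 = allOnes n)
    (hgsub : ∀ i, i ≠ 0 → g i ∈ Csub)
    (hgind : LinearIndependent (ZMod 2) (fun i : {i : Fin k // i ≠ 0} => g i.1))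
    (m r : ℕ) (hr1 : 1 ≤ r) (hr : r ≤ m) :
    (subprod n k r (Fin (m + 1)) g : Set ((Fin (m + 1) → Fin n) → ZMod 2)) =
      {c | ∃ d : Fin k → ((Fin m → Fin n) → ZMod 2),
        d 0 ∈ subprod n k r (Fin m) g ∧
        (∀ i, i ≠ 0 → d i ∈ subprod n k (r - 1) (Fin m) g) ∧
        c = ∑ i, tens2 (d i) (g i)} := by
  ext c
  simp only [SetLike.mem_coe, Set.mem_setOf_eq]
  constructor
  · intro hc
    induction hc using Submodule.span_induction with
    | mem c hc =>
      obtain ⟨j, hw, rfl⟩ := hc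
      refine ⟨fun i => if i = j (Fin.last m) then bvec g (Fin.init j) else 0,
        ?_, ?_, ?_⟩
      · dsimp only
        split_ifs with h
        · apply Submodule.subset_span
          refine ⟨Fin.init j, ?_, rfl⟩
          have key := wt_snoc (Fin.init j) (j (Fin.last m))
          rw [Fin.snoc_init_self] at key
          omega
        · exact zero_mem _
      · intro i hi
        dsimp only
        split_ifs with h
        · apply Submodule.subset_span
          refine ⟨Fin.init j, ?_, rfl⟩
          have key := wt_snoc (Fin.init j) (j (Fin.last m))
          rw [Fin.snoc_init_self] at key
          have hne : j (Fin.last m) ≠ 0 := h ▸ hi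
          rw [if_pos hne] at key
          omega
        · exact zero_mem _
      · have heq : ∀ i : Fin k,
            tens2 (if i = j (Fin.last m) then bvec g (Fin.init j) else 0) (g i)
              = if i = j (Fin.last m) then tens2 (bvec g (Fin.init j)) (g i) else 0 := by
          intro i; split_ifs <;> simp [tens2_zero]
        rw [Finset.sum_congr rfl (fun i _ => heq i), Finset.sum_ite_eq' Finset.univ,
          if_pos (Finset.mem_univ _), ← bvec_snoc, Fin.snoc_init_self]
    | zero =>
      exact ⟨0, zero_mem _, fun i _ => zero_mem _, by simp [tens2_zero]⟩
    | add x y hx hy ihx ihy =>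
      obtain ⟨dx, h1, h2, rfl⟩ := ihx
      obtain ⟨dy, h1', h2', rfl⟩ := ihy
      exact ⟨dx + dy, add_mem h1 h1', fun i hi => add_mem (h2 i hi) (h2' i hi),
        by simp [tens2_add, Finset.sum_add_distrib]⟩
    | smul a x hx ih =>
      obtain ⟨d, h1, h2, rfl⟩ := ih
      exact ⟨a • d, Submodule.smul_mem _ _ h1,
        fun i hi => Submodule.smul_mem _ _ (h2 i hi),
        by simp [tens2_smul, Finset.smul_sum]⟩
  · rintro ⟨d, h0, hi, rfl⟩
    apply sum_mem
    intro i _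
    by_cases hi0 : i = 0
    · subst hi0
      exact tens2_mem_subprod n k g 0 (by simp) h0
    · exact tens2_mem_subprod n k g i (by rw [if_pos hi0]; omega) (hi i hi0)
end

section
/- In the decomposition of any codeword c ∈ C^{⊗[r,m]} as c = ∑_{i=0}^{k-1} d_i ⊗ g_i with d_0 ∈ C^{⊗[r,m-1]} and d_i ∈ C^{⊗[r-1,m-1]} for 1 ≤ i ≤ k-1, the tuple (d_0, d_1, ..., d_{k-1}) is uniquely determined by c. -/
theorem stmt3 (n k : ℕ) [NeZero k] (hk : 2 ≤ k)
    (C Csub : Submodule (ZMod 2) (Fin n → ZMod 2))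
    (hC1 : allOnes n ∈ C) (hCk : Module.finrank (ZMod 2) C = k)
    (hsub : Csub ≤ C) (hsubdim : Module.finrank (ZMod 2) Csub = k - 1)
    (hsub1 : allOnes n ∉ Csub)
    (g : Fin k → Fin n → ZMod 2) (hg0 : g 0 = allOnes n)
    (hgsub : ∀ i, i ≠ 0 → g i ∈ Csub)
    (hgind : LinearIndependent (ZMod 2) (fun i : {i : Fin k // i ≠ 0} => g i.1))
    (m r : ℕ) (hr1 : 1 ≤ r) (hr : r ≤ m)
    (d d' : Fin k → ((Fin m → Fin n) → ZMod 2))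
    (hd0 : d 0 ∈ subprod n k r (Fin m) g)
    (hdi : ∀ i, i ≠ 0 → d i ∈ subprod n k (r - 1) (Fin m) g)
    (hd0' : d' 0 ∈ subprod n k r (Fin m) g)
    (hdi' : ∀ i, i ≠ 0 → d' i ∈ subprod n k (r - 1) (Fin m) g)
    (heq : ∑ i, tens2 (d i) (g i) = ∑ i, tens2 (d' i) (g i)) :
    d = d' := by
  classical
  -- First: the full family g is linearly independent.
  have gind : LinearIndependent (ZMod 2) g := by
    rw [Fintype.linearIndependent_iff]
    intro c hc
    have h01 : ∀ a : ZMod 2, a ≠ 0 → a = 1 := by decide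
    have hsplit : c 0 • g 0 + ∑ i ∈ Finset.univ.filter (fun i : Fin k => i ≠ 0), c i • g i = 0 := by
      rw [← hc]
      rw [← Finset.sum_filter_add_sum_filter_not Finset.univ (fun i : Fin k => i = 0)]
      congr 1
      rw [Finset.filter_eq']
      simp
    have h0 : c 0 = 0 := by
      by_contra h
      have hc1 : c 0 = 1 := h01 _ h
      have hmem : (∑ i ∈ Finset.univ.filter (fun i : Fin k => i ≠ 0), c i • g i) ∈ Csub :=
        Submodule.sum_mem _ (fun i hi => by
          simp only [Finset.mem_filter] at hi
          exact Submodule.smul_mem _ _ (hgsub i hi.2))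
      have : g 0 = ∑ i ∈ Finset.univ.filter (fun i : Fin k => i ≠ 0), c i • g i := by
        have := hsplit
        rw [hc1, one_smul] at this
        have h2 : g 0 = -(∑ i ∈ Finset.univ.filter (fun i : Fin k => i ≠ 0), c i • g i) := by
          linear_combination this
        rw [h2]
        have hneg : ∀ a : ZMod 2, -a = a := by decide
        funext t
        simp [hneg]
      rw [hg0] at this
      exact hsub1 (this ▸ hmem)
    have hrest : ∑ i ∈ Finset.univ.filter (fun i : Fin k => i ≠ 0), c i • g i = 0 := by
      rw [h0, zero_smul, zero_add] at hsplit
      exact hsplit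
    have hzero := Fintype.linearIndependent_iff.mp hgind (fun i => c i.1) (by
      rw [← hrest]
      rw [Finset.sum_subtype (Finset.univ.filter (fun i : Fin k => i ≠ 0))
        (p := fun i : Fin k => i ≠ 0) (by simp)])
    intro i
    by_cases hi : i = 0
    · rw [hi]; exact h0
    · exact hzero ⟨i, hi⟩
  funext i x
  -- Evaluate heq at snoc x y for each y.
  have key : ∑ j, (d j x - d' j x) • g j = 0 := by
    funext y
    have := congrFun heq (Fin.snoc x y)
    simp only [Finset.sum_apply, tens2, Fin.init_snoc, Fin.snoc_last] at this
    simp only [Finset.sum_apply, Pi.smul_apply, smul_eq_mul, sub_mul, Pi.zero_apply,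
      Finset.sum_sub_distrib]
    rw [this]
    ring
  have := Fintype.linearIndependent_iff.mp gind _ key i
  have h := sub_eq_zero.mp this
  exact h
end

section
/- The code C^{⊗[r,m]} does not depend on the choice of the complementary subcode: if C_sub and C_sub' are any two (k-1)-dimensional subcodes of C not containing the all-ones vector, then the spans of the corresponding sets {b_j : wt(j) ≤ r} (built from bases of C_sub and C_sub' respectively, together with g_0 = 𝟙_n in position of index 0) coincide. -/
lemma span_ge (n k : ℕ) [NeZero k] (hk : 2 ≤ k)
    (C Csub : Submodule (ZMod 2) (Fin n → ZMod 2))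
    (hC1 : allOnes n ∈ C) (hCk : Module.finrank (ZMod 2) C = k)
    (hsub : Csub ≤ C) (hsubdim : Module.finrank (ZMod 2) Csub = k - 1)
    (hsub1 : allOnes n ∉ Csub)
    (g : Fin k → Fin n → ZMod 2) (hg0 : g 0 = allOnes n)
    (hgsub : ∀ i, i ≠ 0 → g i ∈ Csub)
    (hgind : LinearIndependent (ZMod 2) (fun i : {i : Fin k // i ≠ 0} => g i.1)) :
    C ≤ Submodule.span (ZMod 2) (Set.range g) := by
  classical
  set D := Submodule.span (ZMod 2) (Set.range fun i : {i : Fin k // i ≠ 0} => g i.1) with hD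
  have hDle : D ≤ Csub := by
    rw [hD, Submodule.span_le]
    rintro _ ⟨i, rfl⟩
    exact hgsub i.1 i.2
  have hcard : Fintype.card {i : Fin k // i ≠ 0} = k - 1 := by
    have := Fintype.card_subtype_compl (fun i : Fin k => i = 0)
    simpa using this
  have hDrank : Module.finrank (ZMod 2) D = k - 1 := by
    rw [hD, finrank_span_eq_card hgind, hcard]
  have hDeq : D = Csub :=
    Submodule.eq_of_le_of_finrank_le hDle (by rw [hDrank, hsubdim])
  have hne : allOnes n ≠ 0 := by
    intro h
    exact hsub1 (h ▸ Csub.zero_mem)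
  set T := Csub ⊔ Submodule.span (ZMod 2) {allOnes n} with hT
  have hTle : T ≤ C := sup_le hsub (by rwa [Submodule.span_singleton_le_iff_mem])
  have hinf : Csub ⊓ Submodule.span (ZMod 2) {allOnes n} = ⊥ := by
    rw [eq_bot_iff]
    rintro x ⟨hx1, hx2⟩
    obtain ⟨c, rfl⟩ := Submodule.mem_span_singleton.1 hx2
    fin_cases c
    · simp; exact zero_smul (ZMod 2) _
    · exfalso; apply hsub1; simp at hx1; convert hx1 using 1; exact (one_smul (ZMod 2) _).symm
  have hTrank : Module.finrank (ZMod 2) T = k := by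
    have := Submodule.finrank_sup_add_finrank_inf_eq Csub (Submodule.span (ZMod 2) {allOnes n})
    rw [hinf, hsubdim, finrank_span_singleton hne] at this
    simp at this
    rw [hT, this]
    omega
  have hTeq : T = C := Submodule.eq_of_le_of_finrank_le hTle (by rw [hTrank, hCk])
  rw [← hTeq]
  apply sup_le
  · rw [← hDeq, hD, Submodule.span_le]
    rintro _ ⟨i, rfl⟩
    exact Submodule.subset_span ⟨i.1, rfl⟩
  · rw [Submodule.span_singleton_le_iff_mem, ← hg0]
    exact Submodule.subset_span ⟨0, rfl⟩

lemma key {n k m r : ℕ} [NeZero k] (g g' : Fin k → Fin n → ZMod 2)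
    (h0 : g' 0 = g 0)
    (hmem : ∀ t, g' t ∈ Submodule.span (ZMod 2) (Set.range g)) :
    subprod n k r (Fin m) g' ≤ subprod n k r (Fin m) g := by
  classical
  have hex : ∀ t : Fin k, ∃ c : Fin k → ZMod 2, ∑ s, c s • g s = g' t := by
    intro t
    exact (Submodule.mem_span_range_iff_exists_fun _).1 (hmem t)
  choose c0 hc0 using hex
  set c : Fin k → Fin k → ZMod 2 :=
    Function.update c0 0 (fun s => if s = 0 then 1 else 0) with hcdef
  have hc : ∀ t, ∑ s, c t s • g s = g' t := by
    intro t
    by_cases ht : t = 0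
    · subst ht
      rw [hcdef]
      simp [Function.update_self, h0]
    · rw [hcdef, Function.update_of_ne ht]
      exact hc0 t
  have hc00 : ∀ s, s ≠ 0 → c 0 s = 0 := by
    intro s hs
    rw [hcdef]
    simp [Function.update_self, hs]
  rw [subprod, Submodule.span_le]
  rintro _ ⟨j, hj, rfl⟩
  have expand : bvec g' j = ∑ f : Fin m → Fin k, (∏ ℓ, c (j ℓ) (f ℓ)) • bvec g f := by
    funext i
    simp only [bvec, Finset.sum_apply, Pi.smul_apply, smul_eq_mul]
    calc ∏ ℓ, g' (j ℓ) (i ℓ)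
        = ∏ ℓ, ∑ s, c (j ℓ) s * g s (i ℓ) := by
          refine Finset.prod_congr rfl fun ℓ _ => ?_
          rw [← hc (j ℓ)]
          simp [Finset.sum_apply]
      _ = ∑ f ∈ Fintype.piFinset (fun _ : Fin m => (Finset.univ : Finset (Fin k))),
            ∏ ℓ, c (j ℓ) (f ℓ) * g (f ℓ) (i ℓ) := Finset.prod_univ_sum _ _
      _ = ∑ f : Fin m → Fin k, (∏ ℓ, c (j ℓ) (f ℓ)) * ∏ ℓ, g (f ℓ) (i ℓ) := by
          rw [Fintype.piFinset_univ]
          exact Finset.sum_congr rfl fun f _ => Finset.prod_mul_distrib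
  rw [expand]
  apply Submodule.sum_mem
  intro f _
  by_cases hcf : (∏ ℓ, c (j ℓ) (f ℓ)) = 0
  · rw [hcf, zero_smul]; exact Submodule.zero_mem _
  · apply Submodule.smul_mem
    apply Submodule.subset_span
    refine ⟨f, le_trans (Finset.card_le_card ?_) hj, rfl⟩
    intro ℓ hℓ
    simp only [Finset.mem_filter, Finset.mem_univ, true_and] at hℓ ⊢
    intro hjℓ
    apply hcf
    apply Finset.prod_eq_zero (Finset.mem_univ ℓ)
    rw [hjℓ]
    exact hc00 _ hℓ

theorem stmt4 (n k : ℕ) [NeZero k] (hk : 2 ≤ k)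
    (C : Submodule (ZMod 2) (Fin n → ZMod 2))
    (hC1 : allOnes n ∈ C) (hCk : Module.finrank (ZMod 2) C = k)
    (Csub Csub' : Submodule (ZMod 2) (Fin n → ZMod 2))
    (hsub : Csub ≤ C) (hsubdim : Module.finrank (ZMod 2) Csub = k - 1)
    (hsub1 : allOnes n ∉ Csub)
    (hsub' : Csub' ≤ C) (hsubdim' : Module.finrank (ZMod 2) Csub' = k - 1)
    (hsub1' : allOnes n ∉ Csub')
    (g g' : Fin k → Fin n → ZMod 2)
    (hg0 : g 0 = allOnes n) (hg0' : g' 0 = allOnes n)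
    (hgsub : ∀ i, i ≠ 0 → g i ∈ Csub) (hgsub' : ∀ i, i ≠ 0 → g' i ∈ Csub')
    (hgind : LinearIndependent (ZMod 2) (fun i : {i : Fin k // i ≠ 0} => g i.1))
    (hgind' : LinearIndependent (ZMod 2) (fun i : {i : Fin k // i ≠ 0} => g' i.1))
    (m r : ℕ) (hr : r ≤ m) :
    subprod n k r (Fin m) g = subprod n k r (Fin m) g' := by
  have hCg : C ≤ Submodule.span (ZMod 2) (Set.range g) :=
    span_ge n k hk C Csub hC1 hCk hsub hsubdim hsub1 g hg0 hgsub hgind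
  have hCg' : C ≤ Submodule.span (ZMod 2) (Set.range g') :=
    span_ge n k hk C Csub' hC1 hCk hsub' hsubdim' hsub1' g' hg0' hgsub' hgind'
  have hmemC : ∀ t, g t ∈ C := by
    intro t
    by_cases ht : t = 0
    · rw [ht, hg0]; exact hC1
    · exact hsub (hgsub t ht)
  have hmemC' : ∀ t, g' t ∈ C := by
    intro t
    by_cases ht : t = 0
    · rw [ht, hg0']; exact hC1
    · exact hsub' (hgsub' t ht)
  exact le_antisymm
    (key g' g (by rw [hg0, hg0']) (fun t => hCg' (hmemC t)))
    (key g g' (by rw [hg0, hg0']) (fun t => hCg (hmemC' t)))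
end

section
/- Suppose n ≠ 2d. Then the number of minimum weight codewords of C^{⊗[r,m]} is binomial(m,r) · |A_min(C)|^r, where A_min(C) is the set of minimum weight codewords of C. -/
namespace SP9

lemma zmod2_one (a : ZMod 2) (h : a ≠ 0) : a = 1 := by revert a; decide

lemma zmod2_zero (a : ZMod 2) (h : a ≠ 1) : a = 0 := by revert a; decide

lemma norm_tensor {n : ℕ} {ι : Type} [Fintype ι] [DecidableEq ι] (a : ι → Fin n → ZMod 2) :
    hammingNorm (fun i : ι → Fin n => ∏ ℓ, a ℓ (i ℓ)) = ∏ ℓ, hammingNorm (a ℓ) := by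
  classical
  calc hammingNorm (fun i : ι → Fin n => ∏ ℓ, a ℓ (i ℓ))
      = Fintype.card {i : ι → Fin n // ∀ ℓ, a ℓ (i ℓ) ≠ 0} := by
        rw [Fintype.card_subtype]; unfold hammingNorm; congr 1
        apply Finset.filter_congr; intro i _
        rw [Finset.prod_ne_zero_iff]; simp
    _ = Fintype.card (∀ ℓ, {x : Fin n // a ℓ x ≠ 0}) :=
        Fintype.card_congr (Equiv.subtypePiEquivPi (p := fun ℓ x => a ℓ x ≠ 0))
    _ = ∏ ℓ, hammingNorm (a ℓ) := by
        rw [Fintype.card_pi]; apply Finset.prod_congr rfl; intro ℓ _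
        rw [Fintype.card_subtype]; rfl

lemma norm_allOnes (n : ℕ) : hammingNorm (allOnes n) = n := by
  unfold hammingNorm allOnes
  simp


open Finset

structure Ctx (n k : ℕ) [NeZero k] : Type where
  C : Submodule (ZMod 2) (Fin n → ZMod 2)
  g : Fin k → Fin n → ZMod 2
  dC : ℕ
  hg0 : g 0 = allOnes n
  hgC : ∀ t, g t ∈ C
  hgsum : ∀ v : Fin k → ZMod 2, ∑ t, v t • g t = 0 → v = 0
  hspan : ∀ x ∈ C, ∃ v : Fin k → ZMod 2, x = ∑ t, v t • g t
  hdle : ∀ x ∈ C, x ≠ 0 → dC ≤ hammingNorm x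
  hd1 : 1 ≤ dC
  hdn : dC < n
  hn2 : n ≠ 2 * dC

variable {n k : ℕ} [NeZero k]

lemma subprod_mono {r r' : ℕ} (h : r ≤ r') (ι : Type) [Fintype ι] [DecidableEq ι]
    (g : Fin k → Fin n → ZMod 2) : subprod n k r ι g ≤ subprod n k r' ι g :=
  Submodule.span_mono (fun c hc => by
    obtain ⟨j, hj, hcj⟩ := hc; exact ⟨j, hj.trans h, hcj⟩)

lemma subprod_high {r m : ℕ} (h : m ≤ r) (g : Fin k → Fin n → ZMod 2) :
    subprod n k r (Fin m) g = subprod n k m (Fin m) g := by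
  refine le_antisymm ?_ (subprod_mono h _ g)
  apply Submodule.span_le.2
  intro c hc
  obtain ⟨j, _, hcj⟩ := hc
  apply Submodule.subset_span
  refine ⟨j, ?_, hcj⟩
  calc (Finset.univ.filter fun ℓ => j ℓ ≠ 0).card ≤ (Finset.univ : Finset (Fin m)).card :=
        Finset.card_filter_le _ _
    _ = m := by simp

lemma tensor_mem (ct : Ctx n k) {m r : ℕ} (a : Fin m → Fin n → ZMod 2)
    (ha : ∀ ℓ, a ℓ = allOnes n ∨ a ℓ ∈ ct.C)
    (hcard : (Finset.univ.filter fun ℓ => a ℓ ≠ allOnes n).card ≤ r) :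
    (fun i : Fin m → Fin n => ∏ ℓ, a ℓ (i ℓ)) ∈ subprod n k r (Fin m) ct.g := by
  classical
  have hone : ∀ ℓ, a ℓ = allOnes n →
      a ℓ = ∑ t, (fun t => if t = 0 then (1 : ZMod 2) else 0) t • ct.g t := by
    intro ℓ hℓ
    have : ∑ t, (fun t => if t = 0 then (1 : ZMod 2) else 0) t • ct.g t
        = ∑ t, (if t = 0 then ct.g t else 0) := by
      apply Finset.sum_congr rfl; intro t _
      by_cases h : t = 0 <;> simp [h]
    rw [this, Finset.sum_ite_eq' Finset.univ 0 ct.g]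
    simp [hℓ, ← ct.hg0]
  have hv : ∀ ℓ, ∃ v : Fin k → ZMod 2,
      a ℓ = ∑ t, v t • ct.g t ∧ (a ℓ = allOnes n → ∀ t, t ≠ 0 → v t = 0) := by
    intro ℓ
    by_cases h : a ℓ = allOnes n
    · exact ⟨_, hone ℓ h, fun _ t ht => by simp [ht]⟩
    · obtain ⟨v, hv⟩ := ct.hspan (a ℓ) ((ha ℓ).resolve_left h)
      exact ⟨v, hv, fun hc => absurd hc h⟩
  choose v hva hv0 using hv
  have expand : (fun i : Fin m → Fin n => ∏ ℓ, a ℓ (i ℓ))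
      = ∑ j ∈ Fintype.piFinset (fun _ : Fin m => (Finset.univ : Finset (Fin k))),
          (∏ ℓ, v ℓ (j ℓ)) • bvec ct.g j := by
    funext i
    rw [Finset.sum_apply]
    have : ∀ ℓ, a ℓ (i ℓ) = ∑ t, v ℓ t * ct.g t (i ℓ) := by
      intro ℓ
      conv_lhs => rw [hva ℓ]
      rw [Finset.sum_apply]
      simp [smul_eq_mul]
    simp only [this]
    rw [Finset.prod_univ_sum]
    apply Finset.sum_congr rfl
    intro j _
    rw [Finset.prod_mul_distrib]
    simp [bvec, smul_eq_mul]
  rw [expand]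
  apply Submodule.sum_mem
  intro j _
  by_cases hj : ∃ ℓ, j ℓ ≠ 0 ∧ a ℓ = allOnes n
  · obtain ⟨ℓ, hjℓ, haℓ⟩ := hj
    have : (∏ ℓ', v ℓ' (j ℓ')) = 0 :=
      Finset.prod_eq_zero (Finset.mem_univ ℓ) (hv0 ℓ haℓ _ hjℓ)
    rw [this, zero_smul]
    exact Submodule.zero_mem _
  · push_neg at hj
    apply Submodule.smul_mem
    apply Submodule.subset_span
    refine ⟨j, le_trans (Finset.card_le_card ?_) hcard, rfl⟩
    intro ℓ hℓ
    simp only [Finset.mem_filter, Finset.mem_univ, true_and] at hℓ ⊢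
    exact hj ℓ hℓ

lemma tensor_ne_zero {ι : Type} [Fintype ι] [DecidableEq ι] (a : ι → Fin n → ZMod 2)
    (h : ∀ ℓ, a ℓ ≠ 0) : (fun i : ι → Fin n => ∏ ℓ, a ℓ (i ℓ)) ≠ 0 := by
  rw [← hammingNorm_ne_zero_iff, norm_tensor]
  exact Finset.prod_ne_zero_iff.2 fun ℓ _ => by
    simpa [hammingNorm_eq_zero] using h ℓ

lemma tensor_inj {ι : Type} [Fintype ι] [DecidableEq ι] (a b : ι → Fin n → ZMod 2)
    (ha : ∀ ℓ, a ℓ ≠ 0) (hb : ∀ ℓ, b ℓ ≠ 0)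
    (h : (fun i : ι → Fin n => ∏ ℓ, a ℓ (i ℓ)) = fun i => ∏ ℓ, b ℓ (i ℓ)) : a = b := by
  classical
  have hne := tensor_ne_zero a ha
  rw [Function.ne_iff] at hne
  obtain ⟨i₀, hi₀⟩ := hne
  have hi₀' : (∏ ℓ, a ℓ (i₀ ℓ)) ≠ 0 := by simpa using hi₀
  have hb₀ : (∏ ℓ, b ℓ (i₀ ℓ)) ≠ 0 := by rw [← congrFun h i₀]; exact hi₀'
  have ha1 : ∀ ℓ, a ℓ (i₀ ℓ) = 1 := fun ℓ =>
    zmod2_one _ (Finset.prod_ne_zero_iff.1 hi₀' ℓ (Finset.mem_univ ℓ))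
  have hb1 : ∀ ℓ, b ℓ (i₀ ℓ) = 1 := fun ℓ =>
    zmod2_one _ (Finset.prod_ne_zero_iff.1 hb₀ ℓ (Finset.mem_univ ℓ))
  funext ℓ x
  have key : ∀ (c : ι → Fin n → ZMod 2), (∀ ℓ', c ℓ' (i₀ ℓ') = 1) →
      (∏ ℓ', c ℓ' (Function.update i₀ ℓ x ℓ')) = c ℓ x := by
    intro c hc
    rw [Fintype.prod_eq_single ℓ (fun ℓ' hℓ' => by
      rw [Function.update_of_ne hℓ', hc ℓ'])]
    rw [Function.update_self]
  have := congrFun h (Function.update i₀ ℓ x)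
  rw [key a ha1, key b hb1] at this
  exact this

lemma norm_split {m : ℕ} (c : (Fin (m + 1) → Fin n) → ZMod 2) :
    hammingNorm c = ∑ i' : Fin m → Fin n, hammingNorm (fun u => c (Fin.snoc i' u)) := by
  classical
  calc hammingNorm c = ∑ i, if c i ≠ 0 then 1 else 0 := Finset.card_filter _ _
    _ = ∑ p : Fin n × (Fin m → Fin n),
          if c ((Fin.snocEquiv (fun _ => Fin n)) p) ≠ 0 then 1 else 0 :=
        (Equiv.sum_comp (Fin.snocEquiv (fun _ => Fin n)) _).symm
    _ = ∑ u : Fin n, ∑ i' : Fin m → Fin n, if c (Fin.snoc i' u) ≠ 0 then 1 else 0 := by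
        rw [Fintype.sum_prod_type]; rfl
    _ = ∑ i' : Fin m → Fin n, ∑ u : Fin n, if c (Fin.snoc i' u) ≠ 0 then 1 else 0 :=
        Finset.sum_comm
    _ = ∑ i' : Fin m → Fin n, hammingNorm (fun u => c (Fin.snoc i' u)) := by
        apply Finset.sum_congr rfl; intro i' _
        exact (Finset.card_filter _ _).symm

lemma norm_one_add {y : Fin n → ZMod 2} : hammingNorm (fun u => 1 + y u) = n - hammingNorm y := by
  classical
  unfold hammingNorm
  have h1 : ∀ a : ZMod 2, ((1 + a ≠ 0) ↔ ¬ (a ≠ 0)) := by decide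
  have : (Finset.univ.filter fun u => (fun u => 1 + y u) u ≠ 0)
      = Finset.univ.filter fun u => ¬ (y u ≠ 0) := by
    apply Finset.filter_congr; intro u _; exact h1 (y u)
  rw [this, Finset.filter_not, Finset.card_sdiff_of_subset (Finset.filter_subset _ _)]
  simp

lemma norm_const_one {m : ℕ} :
    hammingNorm (fun _ : Fin m → Fin n => (1 : ZMod 2)) = n ^ m := by
  classical
  unfold hammingNorm
  rw [Finset.filter_true_of_mem (fun _ _ => one_ne_zero)]
  simp [Finset.card_univ]

lemma subprod_zero_mem (ct : Ctx n k) {m : ℕ} (c : (Fin m → Fin n) → ZMod 2)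
    (hc : c ∈ subprod n k 0 (Fin m) ct.g) :
    c = 0 ∨ c = fun _ => (1 : ZMod 2) := by
  classical
  have hset : {c : (Fin m → Fin n) → ZMod 2 |
      ∃ j : Fin m → Fin k, (Finset.univ.filter fun ℓ => j ℓ ≠ 0).card ≤ 0 ∧ c = bvec ct.g j}
      = {fun _ => (1 : ZMod 2)} := by
    ext c'
    constructor
    · rintro ⟨j, hj, rfl⟩
      have hj' : ∀ ℓ, j ℓ = 0 := by
        intro ℓ
        by_contra hne
        have : ℓ ∈ Finset.univ.filter fun ℓ => j ℓ ≠ 0 := by simp [hne]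
        have := Finset.card_pos.2 ⟨ℓ, this⟩
        omega
      have : bvec ct.g j = fun _ => (1 : ZMod 2) := by
        funext i
        unfold bvec
        apply Finset.prod_eq_one
        intro ℓ _
        rw [hj' ℓ, ct.hg0]
        rfl
      simp [this]
    · intro h
      refine ⟨fun _ => 0, by simp, ?_⟩
      rw [h]
      funext i
      unfold bvec
      exact (Finset.prod_eq_one fun ℓ _ => by rw [ct.hg0]; rfl).symm
  unfold subprod at hc
  rw [hset, Submodule.mem_span_singleton] at hc
  obtain ⟨a, rfl⟩ := hc
  have : a = 0 ∨ a = 1 := by revert a; decide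
  rcases this with h | h
  · left; rw [h, zero_smul]
  · right; rw [h, one_smul]

lemma sum_eq_of_le {α : Type} {s : Finset α} {f : α → ℕ} {d : ℕ}
    (h : ∀ x ∈ s, d ≤ f x) (hs : ∑ x ∈ s, f x ≤ d * s.card) : ∀ x ∈ s, f x = d := by
  by_contra hcon
  push_neg at hcon
  obtain ⟨x, hx, hne⟩ := hcon
  have hlt : ∑ x ∈ s, d < ∑ x ∈ s, f x :=
    Finset.sum_lt_sum h ⟨x, hx, lt_of_le_of_ne (h x hx) (Ne.symm hne)⟩
  rw [Finset.sum_const, smul_eq_mul, mul_comm] at hlt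
  omega

lemma decomp (ct : Ctx n k) {m r : ℕ} (c : (Fin (m + 1) → Fin n) → ZMod 2)
    (hc : c ∈ subprod n k r (Fin (m + 1)) ct.g) :
    ∃ d : Fin k → (Fin m → Fin n) → ZMod 2,
      d 0 ∈ subprod n k r (Fin m) ct.g ∧
      (∀ t, t ≠ 0 → d t ∈ subprod n k (r - 1) (Fin m) ct.g) ∧
      (r = 0 → ∀ t, t ≠ 0 → d t = 0) ∧
      c = fun i => ∑ t, d t (Fin.init i) * ct.g t (i (Fin.last m)) := by
  classical
  induction hc using Submodule.span_induction with
  | mem x hx =>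
    obtain ⟨j, hj, rfl⟩ := hx
    have hBA : (Finset.univ.filter fun ℓ : Fin m => Fin.init j ℓ ≠ 0).card
        ≤ (Finset.univ.filter fun ℓ : Fin (m+1) => j ℓ ≠ 0).card := by
      apply Finset.card_le_card_of_injOn Fin.castSucc
      · intro ℓ hℓ
        simp only [Finset.mem_coe, Finset.mem_filter, Finset.mem_univ, true_and] at hℓ ⊢
        exact hℓ
      · exact fun a _ b _ hab => Fin.castSucc_injective _ hab
    have hlast : j (Fin.last m) ≠ 0 →
        (Finset.univ.filter fun ℓ : Fin m => Fin.init j ℓ ≠ 0).card + 1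
        ≤ (Finset.univ.filter fun ℓ : Fin (m+1) => j ℓ ≠ 0).card := by
      intro hne
      have hsub : insert (Fin.last m)
          ((Finset.univ.filter fun ℓ : Fin m => Fin.init j ℓ ≠ 0).image Fin.castSucc)
          ⊆ Finset.univ.filter fun ℓ : Fin (m+1) => j ℓ ≠ 0 := by
        intro ℓ hℓ
        rcases Finset.mem_insert.1 hℓ with h | h
        · subst h; simp [hne]
        · obtain ⟨ℓ', hℓ', rfl⟩ := Finset.mem_image.1 h
          simp only [Finset.mem_filter, Finset.mem_univ, true_and] at hℓ' ⊢
          exact hℓ'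
      have hnotmem : Fin.last m ∉
          ((Finset.univ.filter fun ℓ : Fin m => Fin.init j ℓ ≠ 0).image Fin.castSucc) := by
        intro hmem
        obtain ⟨ℓ', _, heq⟩ := Finset.mem_image.1 hmem
        exact absurd heq (ne_of_lt (Fin.castSucc_lt_last ℓ'))
      have := Finset.card_le_card hsub
      rw [Finset.card_insert_of_notMem hnotmem,
        Finset.card_image_of_injective _ (Fin.castSucc_injective _)] at this
      omega
    refine ⟨fun t => if t = j (Fin.last m) then bvec ct.g (Fin.init j) else 0, ?_, ?_, ?_, ?_⟩
    · dsimp only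
      by_cases h : (0 : Fin k) = j (Fin.last m)
      · rw [if_pos h]
        exact Submodule.subset_span ⟨Fin.init j, hBA.trans hj, rfl⟩
      · rw [if_neg h]
        exact Submodule.zero_mem _
    · intro t htne
      dsimp only
      by_cases h : t = j (Fin.last m)
      · rw [if_pos h]
        have hj0 : j (Fin.last m) ≠ 0 := h ▸ htne
        exact Submodule.subset_span ⟨Fin.init j, by have := hlast hj0; omega, rfl⟩
      · rw [if_neg h]
        exact Submodule.zero_mem _
    · intro hr t htne
      have hj0 : j (Fin.last m) = 0 := by
        by_contra hne
        have := hlast hne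
        omega
      dsimp only
      rw [if_neg (by rw [hj0]; exact htne)]
    · funext i
      have hterm : ∀ t : Fin k,
          (if t = j (Fin.last m) then bvec ct.g (Fin.init j) else 0) (Fin.init i)
            * ct.g t (i (Fin.last m))
          = if t = j (Fin.last m)
              then bvec ct.g (Fin.init j) (Fin.init i) * ct.g (j (Fin.last m)) (i (Fin.last m))
              else 0 := by
        intro t
        by_cases h : t = j (Fin.last m)
        · subst h; rw [if_pos rfl, if_pos rfl]
        · rw [if_neg h, if_neg h, Pi.zero_apply, zero_mul]
      simp only [hterm]
      rw [Finset.sum_ite_eq' Finset.univ (j (Fin.last m)), if_pos (Finset.mem_univ _)]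
      unfold bvec
      rw [Fin.prod_univ_castSucc]
      rfl
  | zero =>
    exact ⟨0, Submodule.zero_mem _, fun _ _ => Submodule.zero_mem _, fun _ _ _ => rfl,
      by funext i; simp⟩
  | add x y hx hy ihx ihy =>
    obtain ⟨d, h0, ht, hz, hd⟩ := ihx
    obtain ⟨d', h0', ht', hz', hd'⟩ := ihy
    refine ⟨d + d', Submodule.add_mem _ h0 h0',
      fun t htne => Submodule.add_mem _ (ht t htne) (ht' t htne),
      fun hr t htne => by rw [Pi.add_apply, hz hr t htne, hz' hr t htne, add_zero], ?_⟩
    funext i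
    rw [Pi.add_apply, hd, hd']
    simp only [Pi.add_apply, add_mul]
    rw [Finset.sum_add_distrib]
  | smul a x hx ih =>
    obtain ⟨d, h0, ht, hz, hd⟩ := ih
    refine ⟨a • d, Submodule.smul_mem _ a h0,
      fun t htne => Submodule.smul_mem _ a (ht t htne),
      fun hr t htne => by rw [Pi.smul_apply, hz hr t htne, smul_zero], ?_⟩
    funext i
    rw [Pi.smul_apply, hd]
    simp only [Pi.smul_apply, smul_eq_mul, Finset.mul_sum]
    apply Finset.sum_congr rfl
    intro t _
    ring

lemma norm_const (a : ZMod 2) : hammingNorm (fun _ : Fin n => a) = if a ≠ 0 then n else 0 := by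
  classical
  by_cases h : a = 0
  · simp [h, hammingNorm_eq_zero]
    rfl
  · rw [if_pos h]
    unfold hammingNorm
    rw [Finset.filter_true_of_mem (fun _ _ => h)]
    simp

lemma row_memC (ct : Ctx n k) {m : ℕ} (d : Fin k → (Fin m → Fin n) → ZMod 2)
    (i' : Fin m → Fin n) : (fun u => ∑ t, d t i' * ct.g t u) ∈ ct.C := by
  have : (fun u => ∑ t, d t i' * ct.g t u) = ∑ t, d t i' • ct.g t := by
    funext u
    rw [Finset.sum_apply]
    apply Finset.sum_congr rfl
    intro t _
    simp [smul_eq_mul]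
  rw [this]
  exact Submodule.sum_mem _ fun t _ => Submodule.smul_mem _ _ (ct.hgC t)

lemma row_zero_iff (ct : Ctx n k) {m : ℕ} (d : Fin k → (Fin m → Fin n) → ZMod 2)
    (i' : Fin m → Fin n) : (fun u => ∑ t, d t i' * ct.g t u) = 0 ↔ ∀ t, d t i' = 0 := by
  constructor
  · intro h
    have : ∑ t, (fun t => d t i') t • ct.g t = 0 := by
      funext u
      rw [Finset.sum_apply]
      have := congrFun h u
      simpa [smul_eq_mul] using this
    have := ct.hgsum _ this
    intro t
    exact congrFun this t
  · intro h
    funext u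
    simp [h]

lemma norm_c_rows (ct : Ctx n k) {m : ℕ} (d : Fin k → (Fin m → Fin n) → ZMod 2)
    (c : (Fin (m + 1) → Fin n) → ZMod 2)
    (hcdef : c = fun i => ∑ t, d t (Fin.init i) * ct.g t (i (Fin.last m))) :
    hammingNorm c = ∑ i' : Fin m → Fin n, hammingNorm (fun u => ∑ t, d t i' * ct.g t u) := by
  rw [norm_split c]
  apply Finset.sum_congr rfl
  intro i' _
  congr 1
  funext u
  rw [hcdef]
  simp [Fin.init_snoc, Fin.snoc_last]

lemma claimA0 (ct : Ctx n k) {m : ℕ} (c : (Fin m → Fin n) → ZMod 2)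
    (hc : c ∈ subprod n k 0 (Fin m) ct.g) (hne : c ≠ 0) :
    ct.dC ^ 0 * n ^ (m - 0) ≤ hammingNorm c := by
  rcases subprod_zero_mem ct c hc with h | h
  · exact absurd h hne
  · rw [h, norm_const_one, pow_zero, one_mul, Nat.sub_zero]

lemma claimB0 (ct : Ctx n k) {m : ℕ} (c : (Fin m → Fin n) → ZMod 2)
    (hc : c ∈ subprod n k 0 (Fin m) ct.g)
    (hwt : hammingNorm c = ct.dC ^ 0 * n ^ (m - 0)) :
    ∃ a : Fin m → Fin n → ZMod 2,
      (∀ ℓ, a ℓ = allOnes n ∨ (a ℓ ∈ ct.C ∧ hammingNorm (a ℓ) = ct.dC)) ∧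
      (Finset.univ.filter fun ℓ => a ℓ ≠ allOnes n).card = 0 ∧
      c = fun i => ∏ ℓ, a ℓ (i ℓ) := by
  classical
  have npos : 0 < n := lt_trans (Nat.lt_of_lt_of_le Nat.zero_lt_one ct.hd1) ct.hdn
  rcases subprod_zero_mem ct c hc with h | h
  · exfalso
    rw [h, hammingNorm_zero, pow_zero, one_mul, Nat.sub_zero] at hwt
    exact (pow_pos npos m).ne hwt
  · refine ⟨fun _ => allOnes n, fun ℓ => Or.inl rfl, ?_, ?_⟩
    · rw [Finset.filter_false_of_mem (fun ℓ _ h => h rfl)]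
      rfl
    · rw [h]
      funext i
      exact (Finset.prod_eq_one fun ℓ _ => rfl).symm

lemma stepA (ct : Ctx n k) {m : ℕ}
    (IHA : ∀ r, r ≤ m → ∀ c ∈ subprod n k r (Fin m) ct.g, c ≠ 0 →
      ct.dC ^ r * n ^ (m - r) ≤ hammingNorm c) :
    ∀ r, r ≤ m + 1 → ∀ c ∈ subprod n k r (Fin (m + 1)) ct.g, c ≠ 0 →
      ct.dC ^ r * n ^ (m + 1 - r) ≤ hammingNorm c := by
  classical
  intro r hr c hc hne
  rcases Nat.eq_zero_or_pos r with rfl | hr1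
  · exact claimA0 ct c hc hne
  obtain ⟨d, hd0, hdt, _, hcdef⟩ := decomp ct c hc
  have hwt := norm_c_rows ct d c hcdef
  by_cases hE : ∀ t, t ≠ 0 → d t = 0
  · -- case 1 : c = d 0 ⊗ allOnes
    have hc1 : ∀ i' u, (∑ t, d t i' * ct.g t u) = d 0 i' := by
      intro i' u
      rw [Finset.sum_eq_single 0]
      · simp [ct.hg0, allOnes]
      · intro t _ ht
        rw [hE t ht]
        simp
      · simp
    have hd0ne : d 0 ≠ 0 := by
      intro h0
      apply hne
      funext i
      rw [hcdef]
      simp only [hc1, h0, Pi.zero_apply]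
    have hrowwt : ∀ i', hammingNorm (fun u => ∑ t, d t i' * ct.g t u)
        = if d 0 i' ≠ 0 then n else 0 := by
      intro i'
      simp only [hc1]
      exact norm_const _
    have hwtc : hammingNorm c = n * hammingNorm (d 0) := by
      rw [hwt]
      simp only [hrowwt]
      unfold hammingNorm
      rw [Finset.card_filter, Finset.mul_sum]
      apply Finset.sum_congr rfl
      intro i' _
      by_cases h : d 0 i' = 0 <;> simp [h]
    rcases le_or_gt r m with hrm | hrm
    · have hle := IHA r hrm (d 0) hd0 hd0ne
      have harith : ct.dC ^ r * n ^ (m + 1 - r) = n * (ct.dC ^ r * n ^ (m - r)) := by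
        rw [show m + 1 - r = (m - r) + 1 from by omega, pow_succ]
        ring
      rw [hwtc, harith]
      exact Nat.mul_le_mul_left n hle
    · have hreq : r = m + 1 := by omega
      have hd0' : d 0 ∈ subprod n k m (Fin m) ct.g := by
        rw [← subprod_high (show m ≤ r from by omega) ct.g]
        exact hd0
      have hle := IHA m le_rfl (d 0) hd0' hd0ne
      rw [Nat.sub_self, pow_zero, mul_one] at hle
      rw [hwtc, hreq, Nat.sub_self, pow_zero, mul_one, pow_succ]
      calc ct.dC ^ m * ct.dC ≤ hammingNorm (d 0) * n :=
            Nat.mul_le_mul hle ct.hdn.le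
        _ = n * hammingNorm (d 0) := mul_comm _ _
  · -- case 2
    push_neg at hE
    obtain ⟨t₀, ht₀, hdt₀⟩ := hE
    have hD1 := IHA (r - 1) (by omega) (d t₀) (hdt t₀ ht₀) hdt₀
    set S : Finset (Fin m → Fin n) := Finset.univ.filter fun i' => d t₀ i' ≠ 0 with hS
    have hScard : S.card = hammingNorm (d t₀) := rfl
    have hrowS : ∀ i' ∈ S, ct.dC ≤ hammingNorm (fun u => ∑ t, d t i' * ct.g t u) := by
      intro i' hi'
      apply ct.hdle _ (row_memC ct d i')
      intro h0
      have := (row_zero_iff ct d i').1 h0 t₀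
      rw [hS] at hi'
      simp only [Finset.mem_filter] at hi'
      exact hi'.2 this
    have hsum : ct.dC * S.card ≤ hammingNorm c := by
      rw [hwt]
      calc ct.dC * S.card = ∑ _i' ∈ S, ct.dC := by
            rw [Finset.sum_const, smul_eq_mul, mul_comm]
        _ ≤ ∑ i' ∈ S, hammingNorm (fun u => ∑ t, d t i' * ct.g t u) :=
            Finset.sum_le_sum hrowS
        _ ≤ ∑ i' : Fin m → Fin n, hammingNorm (fun u => ∑ t, d t i' * ct.g t u) :=
            Finset.sum_le_sum_of_subset (Finset.subset_univ S)
    have harith : ct.dC ^ r * n ^ (m + 1 - r)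
        = ct.dC * (ct.dC ^ (r - 1) * n ^ (m - (r - 1))) := by
      rw [show m - (r - 1) = m + 1 - r from by omega, ← mul_assoc, ← pow_succ',
        show r - 1 + 1 = r from by omega]
    rw [harith]
    calc ct.dC * (ct.dC ^ (r - 1) * n ^ (m - (r - 1))) ≤ ct.dC * hammingNorm (d t₀) :=
          Nat.mul_le_mul_left _ hD1
      _ = ct.dC * S.card := by rw [hScard]
      _ ≤ hammingNorm c := hsum

lemma snoc_extend {m : ℕ} (a' : Fin m → Fin n → ZMod 2) (x : Fin n → ZMod 2) :
    (Finset.univ.filter fun ℓ : Fin (m + 1) =>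
        (Fin.snoc a' x : Fin (m + 1) → Fin n → ZMod 2) ℓ ≠ allOnes n).card
      = (Finset.univ.filter fun ℓ : Fin m => a' ℓ ≠ allOnes n).card
        + (if x ≠ allOnes n then 1 else 0) := by
  classical
  rw [Finset.card_filter, Finset.card_filter, Fin.sum_univ_castSucc]
  simp only [Fin.snoc_castSucc, Fin.snoc_last]

lemma snoc_tensor {m : ℕ} (a' : Fin m → Fin n → ZMod 2) (x : Fin n → ZMod 2)
    (i : Fin (m + 1) → Fin n) :
    (∏ ℓ, (Fin.snoc a' x : Fin (m + 1) → Fin n → ZMod 2) ℓ (i ℓ))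
      = (∏ ℓ, a' ℓ (Fin.init i ℓ)) * x (i (Fin.last m)) := by
  rw [Fin.prod_univ_castSucc]
  simp only [Fin.snoc_castSucc, Fin.snoc_last]
  rfl

lemma stepB (ct : Ctx n k) {m : ℕ}
    (IHA : ∀ r, r ≤ m → ∀ c ∈ subprod n k r (Fin m) ct.g, c ≠ 0 →
      ct.dC ^ r * n ^ (m - r) ≤ hammingNorm c)
    (IHB : ∀ r, r ≤ m → ∀ c ∈ subprod n k r (Fin m) ct.g,
      hammingNorm c = ct.dC ^ r * n ^ (m - r) →
      ∃ a : Fin m → Fin n → ZMod 2,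
        (∀ ℓ, a ℓ = allOnes n ∨ (a ℓ ∈ ct.C ∧ hammingNorm (a ℓ) = ct.dC)) ∧
        (Finset.univ.filter fun ℓ => a ℓ ≠ allOnes n).card = r ∧
        c = fun i => ∏ ℓ, a ℓ (i ℓ)) :
    ∀ r, r ≤ m + 1 → ∀ c ∈ subprod n k r (Fin (m + 1)) ct.g,
      hammingNorm c = ct.dC ^ r * n ^ (m + 1 - r) →
      ∃ a : Fin (m + 1) → Fin n → ZMod 2,
        (∀ ℓ, a ℓ = allOnes n ∨ (a ℓ ∈ ct.C ∧ hammingNorm (a ℓ) = ct.dC)) ∧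
        (Finset.univ.filter fun ℓ => a ℓ ≠ allOnes n).card = r ∧
        c = fun i => ∏ ℓ, a ℓ (i ℓ) := by
  classical
  intro r hr c hc hwtc
  rcases Nat.eq_zero_or_pos r with rfl | hr1
  · exact claimB0 ct c hc hwtc
  have npos : 0 < n := lt_of_le_of_lt (Nat.zero_le _) ct.hdn
  have dpos := ct.hd1
  have hcne : c ≠ 0 := by
    intro h0
    rw [h0, hammingNorm_zero] at hwtc
    have h1 : 0 < ct.dC ^ r * n ^ (m + 1 - r) :=
      Nat.mul_pos (pow_pos dpos r) (pow_pos npos _)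
    omega
  obtain ⟨d, hd0, hdt, _, hcdef⟩ := decomp ct c hc
  have hwt := norm_c_rows ct d c hcdef
  by_cases hE : ∀ t, t ≠ 0 → d t = 0
  · -- case 1 : c = d 0 ⊗ allOnes
    have hc1 : ∀ i' u, (∑ t, d t i' * ct.g t u) = d 0 i' := by
      intro i' u
      rw [Finset.sum_eq_single 0]
      · simp [ct.hg0, allOnes]
      · intro t _ ht
        rw [hE t ht]
        simp
      · simp
    have hd0ne : d 0 ≠ 0 := by
      intro h0
      apply hcne
      funext i
      rw [hcdef]
      simp only [hc1, h0, Pi.zero_apply]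
    have hwtc' : hammingNorm c = n * hammingNorm (d 0) := by
      rw [hwt]
      have hrowwt : ∀ i', hammingNorm (fun u => ∑ t, d t i' * ct.g t u)
          = if d 0 i' ≠ 0 then n else 0 := by
        intro i'
        simp only [hc1]
        exact norm_const _
      simp only [hrowwt]
      unfold hammingNorm
      rw [Finset.card_filter, Finset.mul_sum]
      apply Finset.sum_congr rfl
      intro i' _
      by_cases h : d 0 i' = 0 <;> simp [h]
    have hrm : r ≤ m := by
      by_contra hcon
      have hreq : r = m + 1 := by omega
      have hd0' : d 0 ∈ subprod n k m (Fin m) ct.g := by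
        rw [← subprod_high (show m ≤ r from by omega) ct.g]
        exact hd0
      have hle := IHA m le_rfl (d 0) hd0' hd0ne
      rw [Nat.sub_self, pow_zero, mul_one] at hle
      have heq : n * hammingNorm (d 0) = ct.dC ^ (m + 1) := by
        rw [← hwtc', hwtc, hreq, Nat.sub_self, pow_zero, mul_one]
      have h2 : n * ct.dC ^ m ≤ ct.dC * ct.dC ^ m := by
        calc n * ct.dC ^ m ≤ n * hammingNorm (d 0) := Nat.mul_le_mul_left n hle
          _ = ct.dC ^ (m + 1) := heq
          _ = ct.dC * ct.dC ^ m := by rw [pow_succ']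
      have h3 : n ≤ ct.dC :=
        Nat.le_of_mul_le_mul_right (by simpa [mul_comm] using h2) (pow_pos dpos m)
      exact absurd h3 (not_le.2 ct.hdn)
    have hwd0 : hammingNorm (d 0) = ct.dC ^ r * n ^ (m - r) := by
      apply Nat.eq_of_mul_eq_mul_left npos
      rw [← hwtc', hwtc, show m + 1 - r = (m - r) + 1 from by omega, pow_succ]
      ring
    obtain ⟨a', ha1, ha2, ha3⟩ := IHB r hrm (d 0) hd0 hwd0
    refine ⟨Fin.snoc a' (allOnes n), ?_, ?_, ?_⟩
    · intro ℓ
      refine Fin.lastCases ?_ ?_ ℓ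
      · rw [Fin.snoc_last]
        exact Or.inl rfl
      · intro ℓ'
        rw [Fin.snoc_castSucc]
        exact ha1 ℓ'
    · rw [snoc_extend, ha2]
      simp
    · funext i
      have lhs : c i = d 0 (Fin.init i) := by
        rw [hcdef]
        exact hc1 _ _
      rw [lhs, congrFun ha3 (Fin.init i), snoc_tensor]
      simp [allOnes]
  · -- case 2
    push_neg at hE
    obtain ⟨t₀, ht₀, hdt₀⟩ := hE
    have hr1m : r - 1 ≤ m := by omega
    have hD1 := IHA (r - 1) hr1m (d t₀) (hdt t₀ ht₀) hdt₀
    set D1 := ct.dC ^ (r - 1) * n ^ (m - (r - 1)) with hD1def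
    have harith : ct.dC ^ r * n ^ (m + 1 - r) = ct.dC * D1 := by
      rw [hD1def, show m - (r - 1) = m + 1 - r from by omega, ← mul_assoc, ← pow_succ',
        show r - 1 + 1 = r from by omega]
    have hD1pos : 0 < D1 :=
      Nat.mul_pos (pow_pos dpos _) (pow_pos npos _)
    set N : Finset (Fin m → Fin n) :=
      Finset.univ.filter (fun i' => (fun u => ∑ t, d t i' * ct.g t u) ≠ 0) with hN
    have hsupp : ∀ t (i' : Fin m → Fin n), d t i' ≠ 0 → i' ∈ N := by
      intro t i' hne
      rw [hN, Finset.mem_filter]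
      refine ⟨Finset.mem_univ _, ?_⟩
      intro h0
      exact hne ((row_zero_iff ct d i').1 h0 t)
    have hwtd : ∀ t, hammingNorm (d t) = (Finset.univ.filter fun i' => d t i' ≠ 0).card := by
      intro t; rfl
    have hNge : D1 ≤ N.card := by
      calc D1 ≤ hammingNorm (d t₀) := hD1
        _ = (Finset.univ.filter fun i' => d t₀ i' ≠ 0).card := hwtd t₀
        _ ≤ N.card := Finset.card_le_card (fun i' hi' => by
            simp only [Finset.mem_filter, Finset.mem_univ, true_and] at hi'
            exact hsupp t₀ i' hi')
    have hrow_ge : ∀ i' ∈ N, ct.dC ≤ hammingNorm (fun u => ∑ t, d t i' * ct.g t u) := by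
      intro i' hi'
      rw [hN, Finset.mem_filter] at hi'
      exact ct.hdle _ (row_memC ct d i') hi'.2
    have hsum_eq : hammingNorm c = ∑ i' ∈ N, hammingNorm (fun u => ∑ t, d t i' * ct.g t u) := by
      rw [hwt]
      symm
      apply Finset.sum_subset (Finset.subset_univ N)
      intro i' _ hnot
      rw [hN, Finset.mem_filter] at hnot
      push_neg at hnot
      rw [hnot (Finset.mem_univ i'), hammingNorm_zero]
    have hNle : ct.dC * N.card ≤ hammingNorm c := by
      rw [hsum_eq]
      calc ct.dC * N.card = ∑ _i' ∈ N, ct.dC := by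
            rw [Finset.sum_const, smul_eq_mul, mul_comm]
        _ ≤ _ := Finset.sum_le_sum hrow_ge
    have hNcard : N.card = D1 := by
      have h1 : ct.dC * N.card ≤ ct.dC * D1 := by
        rw [← harith, ← hwtc]
        exact hNle
      have := Nat.le_of_mul_le_mul_left h1 dpos
      omega
    have hroweq : ∀ i' ∈ N, hammingNorm (fun u => ∑ t, d t i' * ct.g t u) = ct.dC := by
      apply sum_eq_of_le hrow_ge
      rw [← hsum_eq, hwtc, harith, hNcard]
    have hNne : N.Nonempty := Finset.card_pos.1 (by omega)
    set indN : (Fin m → Fin n) → ZMod 2 := fun i' => if i' ∈ N then 1 else 0 with hindN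
    have hindNne : indN ≠ 0 := by
      obtain ⟨i₁, hi₁⟩ := hNne
      intro h0
      have := congrFun h0 i₁
      rw [hindN] at this
      simp [hi₁] at this
    have hdind : ∀ t, t ≠ 0 → d t = 0 ∨ d t = indN := by
      intro t ht
      by_cases h : d t = 0
      · exact Or.inl h
      · right
        have hsuppeq : (Finset.univ.filter fun i' => d t i' ≠ 0) = N := by
          apply Finset.eq_of_subset_of_card_le
          · intro i' hi'
            simp only [Finset.mem_filter, Finset.mem_univ, true_and] at hi'
            exact hsupp t i' hi'
          · rw [← hwtd t, hNcard]
            exact IHA (r - 1) hr1m (d t) (hdt t ht) h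
        funext i'
        rw [hindN]
        dsimp only
        by_cases hi : i' ∈ N
        · rw [if_pos hi]
          rw [← hsuppeq, Finset.mem_filter] at hi
          exact zmod2_one _ hi.2
        · rw [if_neg hi]
          by_contra hne
          rw [← hsuppeq] at hi
          exact hi (by simp [hne])
    have hdt₀N : d t₀ = indN := (hdind t₀ ht₀).resolve_left hdt₀
    -- the shifted part y
    set y : Fin n → ZMod 2 :=
      fun u => ∑ t ∈ Finset.univ.erase 0, (if d t = 0 then 0 else 1 : ZMod 2) * ct.g t u with hy
    have hrowy : ∀ i' ∈ N, (fun u => ∑ t, d t i' * ct.g t u)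
        = fun u => d 0 i' + y u := by
      intro i' hi'
      funext u
      rw [← Finset.add_sum_erase Finset.univ _ (Finset.mem_univ 0)]
      congr 1
      · rw [ct.hg0]
        exact mul_one _
      · rw [hy]
        dsimp only
        apply Finset.sum_congr rfl
        intro t ht
        have htne : t ≠ 0 := (Finset.mem_erase.1 ht).1
        rcases hdind t htne with h | h
        · rw [h]
          simp
        · rw [h, if_neg hindNne, hindN]
          dsimp only
          simp [hi']
    have hvals : (∀ i' ∈ N, d 0 i' = 0) ∨ (∀ i' ∈ N, d 0 i' = 1) := by
      by_contra hcon
      push_neg at hcon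
      obtain ⟨⟨i₂, hi₂, h₂⟩, ⟨i₁, hi₁, h₁⟩⟩ := hcon
      have h₂' : d 0 i₂ = 1 := zmod2_one _ h₂
      have h₁' : d 0 i₁ = 0 := zmod2_zero _ h₁
      have hy1 : hammingNorm y = ct.dC := by
        have := hroweq i₁ hi₁
        rw [hrowy i₁ hi₁] at this
        simpa [h₁'] using this
      have hy2 : hammingNorm (fun u => 1 + y u) = ct.dC := by
        have := hroweq i₂ hi₂
        rw [hrowy i₂ hi₂] at this
        simpa [h₂'] using this
      rw [norm_one_add, hy1] at hy2
      have hdn := ct.hdn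
      have hn2 := ct.hn2
      omega
    have hd0form : ∃ ε : ZMod 2, d 0 = fun i' => ε * indN i' := by
      rcases hvals with hv | hv
      · refine ⟨0, funext fun i' => ?_⟩
        rw [zero_mul]
        by_cases hi : i' ∈ N
        · exact hv i' hi
        · by_contra hne
          exact hi (hsupp 0 i' hne)
      · refine ⟨1, funext fun i' => ?_⟩
        rw [one_mul, hindN]
        dsimp only
        by_cases hi : i' ∈ N
        · rw [if_pos hi]; exact hv i' hi
        · rw [if_neg hi]
          by_contra hne
          exact hi (hsupp 0 i' hne)
    obtain ⟨ε, hd0eq⟩ := hd0form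
    set V : Fin k → ZMod 2 := fun t => if t = 0 then ε else if d t = 0 then 0 else 1 with hV
    have hdV : ∀ t, d t = fun i' => V t * indN i' := by
      intro t
      by_cases ht : t = 0
      · subst ht
        rw [hV]
        simpa using hd0eq
      · rw [hV]
        simp only [if_neg ht]
        rcases hdind t ht with h | h
        · rw [h]
          funext i'
          simp
        · rw [h, if_neg hindNne]
          funext i'
          rw [one_mul]
    set xrow : Fin n → ZMod 2 := fun u => ∑ t, V t * ct.g t u with hxrow
    have hcten : ∀ i, c i = indN (Fin.init i) * xrow (i (Fin.last m)) := by
      intro i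
      rw [hcdef]
      dsimp only
      calc ∑ t, d t (Fin.init i) * ct.g t (i (Fin.last m))
          = ∑ t, indN (Fin.init i) * (V t * ct.g t (i (Fin.last m))) := by
            apply Finset.sum_congr rfl
            intro t _
            rw [hdV t]
            ring
        _ = indN (Fin.init i) * xrow (i (Fin.last m)) := by
            rw [← Finset.mul_sum]
    obtain ⟨i₁, hi₁⟩ := hNne
    have hxroweq : xrow = fun u => ∑ t, d t i₁ * ct.g t u := by
      funext u
      rw [hxrow]
      dsimp only
      apply Finset.sum_congr rfl
      intro t _
      rw [hdV t, hindN]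
      simp [hi₁]
    have hxC : xrow ∈ ct.C := by
      rw [hxroweq]
      exact row_memC ct d i₁
    have hxwt : hammingNorm xrow = ct.dC := by
      rw [hxroweq]
      exact hroweq i₁ hi₁
    have hxne1 : xrow ≠ allOnes n := by
      intro h
      rw [h, norm_allOnes] at hxwt
      exact absurd hxwt.symm (ne_of_lt ct.hdn)
    have hindwt : hammingNorm indN = D1 := by
      rw [← hNcard]
      have hfil : (Finset.univ.filter fun i' => indN i' ≠ 0) = N := by
        ext i'
        rw [Finset.mem_filter]
        constructor
        · rintro ⟨-, hne⟩
          by_contra hi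
          apply hne
          rw [hindN]
          dsimp only
          rw [if_neg hi]
        · intro hi
          refine ⟨Finset.mem_univ _, ?_⟩
          rw [hindN]
          dsimp only
          rw [if_pos hi]
          exact one_ne_zero
      unfold hammingNorm
      rw [hfil]
    have hindmem : indN ∈ subprod n k (r - 1) (Fin m) ct.g := hdt₀N ▸ hdt t₀ ht₀
    obtain ⟨a', ha1, ha2, ha3⟩ := IHB (r - 1) hr1m indN hindmem (by rw [hindwt])
    refine ⟨Fin.snoc a' xrow, ?_, ?_, ?_⟩
    · intro ℓ
      refine Fin.lastCases ?_ ?_ ℓ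
      · rw [Fin.snoc_last]
        exact Or.inr ⟨hxC, hxwt⟩
      · intro ℓ'
        rw [Fin.snoc_castSucc]
        exact ha1 ℓ'
    · rw [snoc_extend, ha2, if_pos hxne1]
      omega
    · funext i
      calc c i = indN (Fin.init i) * xrow (i (Fin.last m)) := hcten i
        _ = (∏ ℓ, a' ℓ (Fin.init i ℓ)) * xrow (i (Fin.last m)) := by
            rw [congrFun ha3 (Fin.init i)]
        _ = ∏ ℓ, (Fin.snoc a' xrow : Fin (m + 1) → Fin n → ZMod 2) ℓ (i ℓ) :=
            (snoc_tensor _ _ _).symm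

lemma claims (ct : Ctx n k) (m : ℕ) :
    (∀ r, r ≤ m → ∀ c ∈ subprod n k r (Fin m) ct.g, c ≠ 0 →
      ct.dC ^ r * n ^ (m - r) ≤ hammingNorm c) ∧
    (∀ r, r ≤ m → ∀ c ∈ subprod n k r (Fin m) ct.g,
      hammingNorm c = ct.dC ^ r * n ^ (m - r) →
      ∃ a : Fin m → Fin n → ZMod 2,
        (∀ ℓ, a ℓ = allOnes n ∨ (a ℓ ∈ ct.C ∧ hammingNorm (a ℓ) = ct.dC)) ∧
        (Finset.univ.filter fun ℓ => a ℓ ≠ allOnes n).card = r ∧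
        c = fun i => ∏ ℓ, a ℓ (i ℓ)) := by
  induction m with
  | zero =>
    constructor
    · intro r hr
      obtain rfl : r = 0 := Nat.le_zero.1 hr
      intro c hc hne
      exact claimA0 ct c hc hne
    · intro r hr
      obtain rfl : r = 0 := Nat.le_zero.1 hr
      intro c hc hwt
      exact claimB0 ct c hc hwt
  | succ m ih => exact ⟨stepA ct ih.1, stepB ct ih.1 ih.2⟩

lemma add_self_zmod2 {M : Type} [AddCommGroup M] [Module (ZMod 2) M] (x : M) : x + x = 0 := by
  have h : (2 : ZMod 2) • x = x + x := two_smul _ x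
  rw [show (2 : ZMod 2) = 0 from rfl, zero_smul] at h
  exact h.symm

lemma mkCtx (hk : 2 ≤ k)
    (C Csub : Submodule (ZMod 2) (Fin n → ZMod 2))
    (hC1 : allOnes n ∈ C) (hCk : Module.finrank (ZMod 2) C = k)
    (hsub : Csub ≤ C) (hsub1 : allOnes n ∉ Csub)
    (g : Fin k → Fin n → ZMod 2) (hg0 : g 0 = allOnes n)
    (hgsub : ∀ i, i ≠ 0 → g i ∈ Csub)
    (hgind : LinearIndependent (ZMod 2) (fun i : {i : Fin k // i ≠ 0} => g i.1))
    (dC : ℕ)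
    (hdle : ∀ x ∈ C, x ≠ 0 → dC ≤ hammingNorm x)
    (hdex : ∃ x ∈ C, x ≠ 0 ∧ hammingNorm x = dC)
    (hn : n ≠ 2 * dC) :
    ∃ ct : Ctx n k, ct.C = C ∧ ct.g = g ∧ ct.dC = dC := by
  classical
  have hgC : ∀ t, g t ∈ C := by
    intro t
    by_cases ht : t = 0
    · rw [ht, hg0]; exact hC1
    · exact hsub (hgsub t ht)
  have hgsum : ∀ v : Fin k → ZMod 2, ∑ t, v t • g t = 0 → v = 0 := by
    intro v hv
    have split := Finset.add_sum_erase Finset.univ (fun t => v t • g t) (Finset.mem_univ (0 : Fin k))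
    rw [hv] at split
    have hmemsub : (∑ t ∈ Finset.univ.erase 0, v t • g t) ∈ Csub :=
      Submodule.sum_mem _ fun t ht =>
        Submodule.smul_mem _ _ (hgsub t (Finset.mem_erase.1 ht).1)
    have hv0 : v 0 = 0 := by
      by_contra h
      have h1 : v 0 = 1 := zmod2_one _ h
      have h2 : v 0 • g 0 + (∑ t ∈ Finset.univ.erase 0, v t • g t)
          + (∑ t ∈ Finset.univ.erase 0, v t • g t)
          = ∑ t ∈ Finset.univ.erase 0, v t • g t := by
        rw [split, zero_add]
      rw [add_assoc, add_self_zmod2, add_zero, h1, one_smul, hg0] at h2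
      exact hsub1 (h2 ▸ hmemsub)
    have hsum0 : ∑ t ∈ Finset.univ.erase 0, v t • g t = 0 := by
      rw [hv0, zero_smul, zero_add] at split
      exact split
    have hsubty : ∑ i : {i : Fin k // i ≠ 0}, v i.1 • g i.1 = 0 := by
      rw [← Finset.sum_subtype (Finset.univ.erase 0)
        (fun x => by simp [Finset.mem_erase]) (fun t => v t • g t)]
      exact hsum0
    have hall := Fintype.linearIndependent_iff.1 hgind (fun i => v i.1) hsubty
    funext t
    by_cases ht : t = 0
    · rw [ht, hv0]; rfl
    · exact hall ⟨t, ht⟩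
  have glin : LinearIndependent (ZMod 2) g :=
    Fintype.linearIndependent_iff.2 fun v hv => fun i => congrFun (hgsum v hv) i
  have hspan : ∀ x ∈ C, ∃ v : Fin k → ZMod 2, x = ∑ t, v t • g t := by
    intro x hx
    have hle : Submodule.span (ZMod 2) (Set.range g) ≤ C :=
      Submodule.span_le.2 (by rintro _ ⟨t, rfl⟩; exact hgC t)
    have heq : Submodule.span (ZMod 2) (Set.range g) = C := by
      apply Submodule.eq_of_le_of_finrank_le hle
      rw [hCk, finrank_span_eq_card glin, Fintype.card_fin]
    rw [← heq, Submodule.mem_span_range_iff_exists_fun] at hx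
    obtain ⟨v, hv⟩ := hx
    exact ⟨v, hv.symm⟩
  obtain ⟨x, hxC, hxne, hxwt⟩ := hdex
  have hd1 : 1 ≤ dC := by
    have := hammingNorm_pos_iff.2 hxne
    omega
  have hdlen : dC ≤ n := by
    have := hammingNorm_le_card_fintype (x := x)
    rw [Fintype.card_fin] at this
    omega
  have hdn : dC < n := by
    rcases lt_or_eq_of_le hdlen with h | h
    · exact h
    · exfalso
      have h1ne0 : (1 : Fin k) ≠ 0 := by
        intro hcon
        rw [Fin.one_eq_zero_iff] at hcon
        omega
      have hg1ne : g 1 ≠ 0 := by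
        have := hgind.ne_zero ⟨(1 : Fin k), h1ne0⟩
        exact this
      have hg1wt : hammingNorm (g 1) = n := by
        have h1 := hdle (g 1) (hgC 1) hg1ne
        have h2 := hammingNorm_le_card_fintype (x := g 1)
        rw [Fintype.card_fin] at h2
        omega
      have hg1all : g 1 = allOnes n := by
        have huniv : (Finset.univ.filter fun u => g 1 u ≠ 0) = Finset.univ := by
          apply Finset.eq_univ_of_card
          rw [Fintype.card_fin]
          exact hg1wt
        funext u
        have : u ∈ Finset.univ.filter fun u => g 1 u ≠ 0 := by
          rw [huniv]
          exact Finset.mem_univ u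
        rw [Finset.mem_filter] at this
        exact zmod2_one _ this.2
      exact hsub1 (hg1all ▸ hgsub 1 h1ne0)
  exact ⟨⟨C, g, dC, hg0, hgC, hgsum, hspan, hdle, hd1, hdn, hn⟩, rfl, rfl, rfl⟩

lemma good_entry_ne_zero (ct : Ctx n k) (x : Fin n → ZMod 2)
    (h : x = allOnes n ∨ (x ∈ ct.C ∧ hammingNorm x = ct.dC)) : x ≠ 0 := by
  have npos : 0 < n := lt_of_le_of_lt (Nat.zero_le _) ct.hdn
  rcases h with h | h
  · intro h0
    rw [h] at h0
    have := congrFun h0 ⟨0, npos⟩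
    exact one_ne_zero this
  · intro h0
    rw [h0, hammingNorm_zero] at h
    have := ct.hd1
    omega

end SP9

theorem stmt9 (n k : ℕ) [NeZero k] (hk : 2 ≤ k)
    (C Csub : Submodule (ZMod 2) (Fin n → ZMod 2))
    (hC1 : allOnes n ∈ C) (hCk : Module.finrank (ZMod 2) C = k)
    (hsub : Csub ≤ C) (hsubdim : Module.finrank (ZMod 2) Csub = k - 1)
    (hsub1 : allOnes n ∉ Csub)
    (g : Fin k → Fin n → ZMod 2) (hg0 : g 0 = allOnes n)
    (hgsub : ∀ i, i ≠ 0 → g i ∈ Csub)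
    (hgind : LinearIndependent (ZMod 2) (fun i : {i : Fin k // i ≠ 0} => g i.1))
    (dC : ℕ)
    (hdle : ∀ x ∈ C, x ≠ 0 → dC ≤ hammingNorm x)
    (hdex : ∃ x ∈ C, x ≠ 0 ∧ hammingNorm x = dC)
    (hn : n ≠ 2 * dC)
    (m r : ℕ) (hr : r ≤ m) :
    {c | c ∈ subprod n k r (Fin m) g ∧ hammingNorm c = dC ^ r * n ^ (m - r)}.ncard =
      Nat.choose m r * {x | x ∈ C ∧ hammingNorm x = dC}.ncard ^ r := by
  classical
  obtain ⟨ct, hctC, hctg, hctd⟩ :=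
    SP9.mkCtx hk C Csub hC1 hCk hsub hsub1 g hg0 hgsub hgind dC hdle hdex hn
  subst hctC hctg hctd
  have npos : 0 < n := lt_of_le_of_lt (Nat.zero_le _) ct.hdn
  set A : Finset (Fin n → ZMod 2) :=
    Finset.univ.filter fun x => x ∈ ct.C ∧ hammingNorm x = ct.dC with hA
  have hRHS : {x | x ∈ ct.C ∧ hammingNorm x = ct.dC} = ↑A := by
    ext x
    simp [hA]
  set G : Finset (Fin m → Fin n → ZMod 2) := Finset.univ.filter fun a =>
    (∀ ℓ, a ℓ = allOnes n ∨ (a ℓ ∈ ct.C ∧ hammingNorm (a ℓ) = ct.dC)) ∧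
    (Finset.univ.filter fun ℓ => a ℓ ≠ allOnes n).card = r with hG
  have hmemG : ∀ a, a ∈ G ↔
      ((∀ ℓ, a ℓ = allOnes n ∨ (a ℓ ∈ ct.C ∧ hammingNorm (a ℓ) = ct.dC)) ∧
       (Finset.univ.filter fun ℓ => a ℓ ≠ allOnes n).card = r) := by
    intro a
    rw [hG, Finset.mem_filter]
    simp
  have hwtT : ∀ a ∈ G, hammingNorm (fun i : Fin m → Fin n => ∏ ℓ, a ℓ (i ℓ))
      = ct.dC ^ r * n ^ (m - r) := by
    intro a haG
    obtain ⟨h1, h2⟩ := (hmemG a).1 haG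
    rw [SP9.norm_tensor]
    have hterm : ∀ ℓ, hammingNorm (a ℓ) = if a ℓ ≠ allOnes n then ct.dC else n := by
      intro ℓ
      rcases h1 ℓ with h | h
      · rw [if_neg (by simpa using h), h, SP9.norm_allOnes]
      · rw [h.2, if_pos]
        intro hall
        rw [hall, SP9.norm_allOnes] at h
        exact (ne_of_lt ct.hdn) h.2.symm
    rw [Finset.prod_congr rfl (fun ℓ _ => hterm ℓ), Finset.prod_ite _ _,
      Finset.prod_const, Finset.prod_const, h2]
    congr 1
    have := Finset.card_filter_add_card_filter_not
      (s := (Finset.univ : Finset (Fin m))) (p := fun ℓ => a ℓ ≠ allOnes n)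
    rw [Finset.card_univ, Fintype.card_fin] at this
    congr 1
    omega
  have hset : {c | c ∈ subprod n k r (Fin m) ct.g ∧
        hammingNorm c = ct.dC ^ r * n ^ (m - r)}
      = (fun a : Fin m → Fin n → ZMod 2 => fun i => ∏ ℓ, a ℓ (i ℓ)) '' ↑G := by
    ext c
    constructor
    · rintro ⟨hc, hwtc⟩
      obtain ⟨a, ha1, ha2, ha3⟩ := (SP9.claims ct m).2 r hr c hc hwtc
      exact ⟨a, (hmemG a).2 ⟨ha1, ha2⟩, ha3.symm⟩
    · rintro ⟨a, haG, rfl⟩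
      obtain ⟨h1, h2⟩ := (hmemG a).1 haG
      refine ⟨SP9.tensor_mem ct a (fun ℓ => ?_) (le_of_eq h2), hwtT a haG⟩
      rcases h1 ℓ with h | h
      · exact Or.inl h
      · exact Or.inr h.1
  have hinj : Set.InjOn (fun a : Fin m → Fin n → ZMod 2 => fun i : Fin m → Fin n =>
      ∏ ℓ, a ℓ (i ℓ)) ↑G := by
    intro a ha b hb heq
    obtain ⟨ha1, -⟩ := (hmemG a).1 ha
    obtain ⟨hb1, -⟩ := (hmemG b).1 hb
    exact SP9.tensor_inj a b (fun ℓ => SP9.good_entry_ne_zero ct _ (ha1 ℓ))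
      (fun ℓ => SP9.good_entry_ne_zero ct _ (hb1 ℓ)) heq
  -- counting G
  have hkey : ∀ S ∈ Finset.powersetCard r (Finset.univ : Finset (Fin m)),
      ∀ a : Fin m → Fin n → ZMod 2,
      a ∈ Fintype.piFinset (fun ℓ => if ℓ ∈ S then A else {allOnes n}) →
      (Finset.univ.filter fun ℓ => a ℓ ≠ allOnes n) = S := by
    intro S _ a hpi
    ext ℓ
    rw [Finset.mem_filter]
    have hℓ := Fintype.mem_piFinset.1 hpi ℓ
    constructor
    · rintro ⟨-, hne⟩
      by_contra hnotin
      rw [if_neg hnotin, Finset.mem_singleton] at hℓ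
      exact hne hℓ
    · intro hin
      rw [if_pos hin, hA, Finset.mem_filter] at hℓ
      refine ⟨Finset.mem_univ _, ?_⟩
      intro hall
      have h2 := hℓ.2.2
      rw [hall, SP9.norm_allOnes] at h2
      exact (ne_of_lt ct.hdn) h2.symm
  have hGbi : G = (Finset.powersetCard r (Finset.univ : Finset (Fin m))).biUnion
      (fun S => Fintype.piFinset fun ℓ => if ℓ ∈ S then A else {allOnes n}) := by
    ext a
    rw [Finset.mem_biUnion, hmemG]
    constructor
    · rintro ⟨h1, h2⟩
      refine ⟨Finset.univ.filter fun ℓ => a ℓ ≠ allOnes n, ?_, ?_⟩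
      · rw [Finset.mem_powersetCard]
        exact ⟨Finset.filter_subset _ _, h2⟩
      · rw [Fintype.mem_piFinset]
        intro ℓ
        by_cases hm : a ℓ ≠ allOnes n
        · rw [if_pos (by simp [hm])]
          rcases h1 ℓ with h | h
          · exact absurd h hm
          · rw [hA, Finset.mem_filter]
            exact ⟨Finset.mem_univ _, h⟩
        · rw [if_neg (by simp [hm]), Finset.mem_singleton]
          push_neg at hm
          exact hm
    · rintro ⟨S, hS, hpi⟩
      constructor
      · intro ℓ
        have hℓ := Fintype.mem_piFinset.1 hpi ℓ
        by_cases hin : ℓ ∈ S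
        · rw [if_pos hin, hA, Finset.mem_filter] at hℓ
          exact Or.inr hℓ.2
        · rw [if_neg hin, Finset.mem_singleton] at hℓ
          exact Or.inl hℓ
      · rw [hkey S hS a hpi]
        exact (Finset.mem_powersetCard.1 hS).2
  have hGcard : G.card = Nat.choose m r * A.card ^ r := by
    rw [hGbi, Finset.card_biUnion (fun S1 h1 S2 h2 hne => Finset.disjoint_left.2
      fun a ha1 ha2 => hne (by rw [← hkey S1 h1 a ha1, hkey S2 h2 a ha2]))]
    have hpc : ∀ S ∈ Finset.powersetCard r (Finset.univ : Finset (Fin m)),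
        (Fintype.piFinset fun ℓ => if ℓ ∈ S then A else {allOnes n}).card = A.card ^ r := by
      intro S hS
      rw [Fintype.card_piFinset]
      have hc : ∀ ℓ, ((if ℓ ∈ S then A else {allOnes n}).card)
          = if ℓ ∈ S then A.card else 1 := by
        intro ℓ
        split <;> simp
      rw [Finset.prod_congr rfl (fun ℓ _ => hc ℓ), Finset.prod_ite_mem,
        Finset.univ_inter, Finset.prod_const, (Finset.mem_powersetCard.1 hS).2]
    rw [Finset.sum_congr rfl hpc, Finset.sum_const, Finset.card_powersetCard,
      Finset.card_univ, Fintype.card_fin, smul_eq_mul]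
  rw [hset, hRHS, Set.ncard_coe_finset, Set.ncard_image_of_injOn hinj,
    Set.ncard_coe_finset]
  exact hGcard
end

section
/- If n ≠ 2d and the minimum weight codewords of C span C, then the minimum weight codewords of C^{⊗[r,m]} span C^{⊗[r,m]}. -/
/-- The `m`-fold tensor (Kronecker) product as a multilinear map. -/
def prodML (n m : ℕ) :
    MultilinearMap (ZMod 2) (fun _ : Fin m => (Fin n → ZMod 2)) ((Fin m → Fin n) → ZMod 2) :=
  MultilinearMap.pi fun i =>
    (MultilinearMap.mkPiAlgebra (ZMod 2) (Fin m) (ZMod 2)).compLinearMap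
      fun ℓ => LinearMap.proj (i ℓ)

lemma prodML_apply {n m : ℕ} (a : Fin m → Fin n → ZMod 2) (i : Fin m → Fin n) :
    prodML n m a i = ∏ ℓ, a ℓ (i ℓ) := by
  simp [prodML, MultilinearMap.pi, MultilinearMap.compLinearMap,
    MultilinearMap.mkPiAlgebra]

lemma hammingNorm_allOnes (n : ℕ) : hammingNorm (allOnes n) = n := by
  simp [hammingNorm, allOnes]

lemma hammingNorm_prod {n m : ℕ} (a : Fin m → Fin n → ZMod 2) :
    hammingNorm (fun i : Fin m → Fin n => ∏ ℓ, a ℓ (i ℓ)) = ∏ ℓ, hammingNorm (a ℓ) := by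
  classical
  simp only [hammingNorm]
  rw [← Fintype.card_piFinset]
  congr 1
  ext i
  simp [Fintype.mem_piFinset, Finset.prod_eq_zero_iff]

lemma multilinear_mem_span {m : ℕ} {M N : Type*} [AddCommMonoid M] [Module (ZMod 2) M]
    [AddCommMonoid N] [Module (ZMod 2) N]
    (f : MultilinearMap (ZMod 2) (fun _ : Fin m => M) N)
    (s : Fin m → Set M) (c : Fin m → M)
    (hc : ∀ ℓ, c ℓ ∈ Submodule.span (ZMod 2) (s ℓ)) :
    f c ∈ Submodule.span (ZMod 2) {x | ∃ a : Fin m → M, (∀ ℓ, a ℓ ∈ s ℓ) ∧ x = f a} := by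
  classical
  choose w hw hsum using fun ℓ => Submodule.mem_span_set.mp (hc ℓ)
  have hc' : c = fun ℓ => ∑ a ∈ (w ℓ).support, (w ℓ) a • a := by
    funext ℓ
    rw [← hsum ℓ, Finsupp.sum]
  have hms := f.map_sum_finset (A := fun ℓ => (w ℓ).support)
    (g := fun ℓ a => (w ℓ) a • a)
  rw [hc', hms]
  refine Submodule.sum_mem _ fun p hp => ?_
  rw [f.map_smul_univ (fun ℓ => (w ℓ) (p ℓ)) p]
  exact Submodule.smul_mem _ _
    (Submodule.subset_span
      ⟨p, fun ℓ => hw ℓ (Finset.mem_coe.mpr (Fintype.mem_piFinset.mp hp ℓ)), rfl⟩)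

theorem stmt10 (n k : ℕ) [NeZero k] (hk : 2 ≤ k)
    (C Csub : Submodule (ZMod 2) (Fin n → ZMod 2))
    (hC1 : allOnes n ∈ C) (hCk : Module.finrank (ZMod 2) C = k)
    (hsub : Csub ≤ C) (hsubdim : Module.finrank (ZMod 2) Csub = k - 1)
    (hsub1 : allOnes n ∉ Csub)
    (g : Fin k → Fin n → ZMod 2) (hg0 : g 0 = allOnes n)
    (hgsub : ∀ i, i ≠ 0 → g i ∈ Csub)
    (hgind : LinearIndependent (ZMod 2) (fun i : {i : Fin k // i ≠ 0} => g i.1))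
    (dC : ℕ)
    (hdle : ∀ x ∈ C, x ≠ 0 → dC ≤ hammingNorm x)
    (hdex : ∃ x ∈ C, x ≠ 0 ∧ hammingNorm x = dC)
    (hn : n ≠ 2 * dC)
    (hspan : Submodule.span (ZMod 2) {x | x ∈ C ∧ hammingNorm x = dC} = C)
    (m r : ℕ) (hr : r ≤ m) :
    Submodule.span (ZMod 2)
        {c | c ∈ subprod n k r (Fin m) g ∧ hammingNorm c = dC ^ r * n ^ (m - r)} =
      subprod n k r (Fin m) g := by
  classical
  have hgC : ∀ i, g i ∈ C := by
    intro i
    rcases eq_or_ne i 0 with h | h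
    · rw [h, hg0]; exact hC1
    · exact hsub (hgsub i h)
  -- the family g is linearly independent
  have hind : LinearIndependent (ZMod 2) g := by
    have he : g ∘ (Equiv.optionSubtypeNe (0 : Fin k)) =
        fun o : Option {i : Fin k // i ≠ 0} =>
          Option.casesOn' o (g 0) (fun i => g i.1) := by
      funext o; cases o <;> rfl
    rw [← linearIndependent_equiv (Equiv.optionSubtypeNe (0 : Fin k)), he,
      linearIndependent_option']
    refine ⟨hgind, fun hmem => hsub1 ?_⟩
    rw [← hg0]
    have hle : Submodule.span (ZMod 2)
        (Set.range fun i : {i : Fin k // i ≠ 0} => g i.1) ≤ Csub := by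
      rw [Submodule.span_le]
      rintro x ⟨i, rfl⟩
      exact hgsub i.1 i.2
    exact hle hmem
  -- g spans C
  have hrange : Submodule.span (ZMod 2) (Set.range g) = C := by
    apply Submodule.eq_of_le_of_finrank_eq
    · rw [Submodule.span_le]
      rintro x ⟨i, rfl⟩
      exact hgC i
    · rw [finrank_span_eq_card hind, Fintype.card_fin, hCk]
  apply le_antisymm
  · exact Submodule.span_le.mpr fun c hc => hc.1
  · rw [subprod]
    apply Submodule.span_le.mpr
    rintro c ⟨j, hj, rfl⟩
    -- choose a set S of size r containing the support of j
    obtain ⟨S, hSsub, -, hScard⟩ :=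
      Finset.exists_subsuperset_card_eq
        (Finset.subset_univ (Finset.univ.filter fun ℓ => j ℓ ≠ 0)) hj
        (by simpa using hr)
    have hjS : ∀ ℓ, ℓ ∉ S → j ℓ = 0 := by
      intro ℓ hℓ
      by_contra h
      exact hℓ (hSsub (Finset.mem_filter.mpr ⟨Finset.mem_univ ℓ, h⟩))
    set Smin : Set (Fin n → ZMod 2) := {x | x ∈ C ∧ hammingNorm x = dC} with hSmin
    set s1 : Fin m → Set (Fin n → ZMod 2) :=
      fun ℓ => if ℓ ∈ S then Smin else {allOnes n} with hs1
    have hb : bvec g j = prodML n m (fun ℓ => g (j ℓ)) := by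
      funext i; rw [prodML_apply]; rfl
    have hc1 : ∀ ℓ, g (j ℓ) ∈ Submodule.span (ZMod 2) (s1 ℓ) := by
      intro ℓ
      by_cases h : ℓ ∈ S
      · simp only [hs1, if_pos h]
        rw [hSmin, hspan]
        exact hgC (j ℓ)
      · simp only [hs1, if_neg h]
        rw [hjS ℓ h, hg0]
        exact Submodule.subset_span rfl
    have hmem := multilinear_mem_span (prodML n m) s1 (fun ℓ => g (j ℓ)) hc1
    rw [← hb] at hmem
    refine Submodule.span_mono ?_ hmem
    -- every tensor of minimum-weight words (supported on S) is a min-weight codeword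
    rintro x ⟨a, ha, rfl⟩
    constructor
    · -- membership in the subproduct code
      set s2 : Fin m → Set (Fin n → ZMod 2) :=
        fun ℓ => if ℓ ∈ S then Set.range g else {g 0} with hs2
      have hc2 : ∀ ℓ, a ℓ ∈ Submodule.span (ZMod 2) (s2 ℓ) := by
        intro ℓ
        have haℓ := ha ℓ
        by_cases h : ℓ ∈ S
        · simp only [hs2, if_pos h]
          rw [hrange]
          simp only [hs1, if_pos h] at haℓ
          exact haℓ.1
        · simp only [hs2, if_neg h]
          simp only [hs1, if_neg h] at haℓ
          rw [haℓ, ← hg0]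
          exact Submodule.subset_span rfl
      have hmem2 := multilinear_mem_span (prodML n m) s2 a hc2
      refine Submodule.span_le.mpr ?_ hmem2
      rintro y ⟨b, hb2, rfl⟩
      apply Submodule.subset_span
      have hbr : ∀ ℓ, ℓ ∈ S → ∃ i, g i = b ℓ := by
        intro ℓ h
        have := hb2 ℓ
        simp only [hs2, if_pos h] at this
        exact this
      refine ⟨fun ℓ => if h : ℓ ∈ S then (hbr ℓ h).choose else 0, ?_, ?_⟩
      · refine le_trans (Finset.card_le_card ?_) hScard.le
        intro ℓ hℓ
        simp only [Finset.mem_filter, Finset.mem_univ, true_and] at hℓ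
        by_contra h
        exact hℓ (dif_neg h)
      · have hbg : ∀ ℓ, b ℓ = g (if h : ℓ ∈ S then (hbr ℓ h).choose else 0) := by
          intro ℓ
          by_cases h : ℓ ∈ S
          · rw [dif_pos h, (hbr ℓ h).choose_spec]
          · rw [dif_neg h, hg0]
            have := hb2 ℓ
            simp only [hs2, if_neg h] at this
            rw [this, hg0]
        funext i
        rw [prodML_apply]
        unfold bvec
        exact Finset.prod_congr rfl fun ℓ _ => by rw [← hbg ℓ]
    · -- the weight computation
      have hpw : prodML n m a = fun i : Fin m → Fin n => ∏ ℓ, a ℓ (i ℓ) := by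
        funext i; rw [prodML_apply]
      rw [hpw, hammingNorm_prod]
      have hwt : ∀ ℓ, hammingNorm (a ℓ) = if ℓ ∈ S then dC else n := by
        intro ℓ
        have haℓ := ha ℓ
        by_cases h : ℓ ∈ S
        · simp only [hs1, if_pos h] at haℓ
          rw [if_pos h]
          exact haℓ.2
        · simp only [hs1, if_neg h] at haℓ
          rw [if_neg h, haℓ, hammingNorm_allOnes]
      have h1 : ∏ ℓ ∈ S, hammingNorm (a ℓ) = dC ^ r := by
        rw [Finset.prod_eq_pow_card fun ℓ hℓ => by rw [hwt ℓ, if_pos hℓ], hScard]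
      have h2 : ∏ ℓ ∈ Sᶜ, hammingNorm (a ℓ) = n ^ (m - r) := by
        rw [Finset.prod_eq_pow_card
            (fun ℓ hℓ => by rw [hwt ℓ, if_neg (Finset.mem_compl.mp hℓ)]),
          Finset.card_compl, hScard, Fintype.card_fin]
      rw [← Finset.prod_mul_prod_compl S, h1, h2]
end

section
/- Projection property: index coordinates of 𝔽_2^{n^m} by tuples i ∈ {0,...,n-1}^m. Let F ⊂ {0,...,m-1} with |F| = f, let u ≠ ũ be two vectors in {0,...,n-1}^f, and let H = {i : i_F = u} and H̃ = {i : i_F = ũ}. If r - 1 ≤ m - f, then for every codeword c ∈ C^{⊗[r,m]}, the sum of the punctured subvectors P_H(c) + P_{H̃}(c), indexed by {0,...,n-1}^{m-f} via the non-frozen coordinates, belongs to C^{⊗[r-1,m-f]}. -/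
lemma bvec_split {n k m : ℕ} (g : Fin k → Fin n → ZMod 2) (j : Fin m → Fin k)
    (F : Finset (Fin m)) (w : {ℓ : Fin m // ℓ ∈ F} → Fin n)
    (i' : {ℓ : Fin m // ℓ ∉ F} → Fin n) :
    bvec g j (fun ℓ => if h : ℓ ∈ F then w ⟨ℓ, h⟩ else i' ⟨ℓ, h⟩) =
      (∏ ℓ : {ℓ : Fin m // ℓ ∈ F}, g (j ℓ.1) (w ℓ)) *
        bvec g (fun ℓ : {ℓ : Fin m // ℓ ∉ F} => j ℓ.1) i' := by
  unfold bvec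
  have h1 : ∀ ℓ : Fin m, g (j ℓ) (if h : ℓ ∈ F then w ⟨ℓ,h⟩ else i' ⟨ℓ,h⟩)
      = dite (ℓ ∈ F) (fun h => g (j ℓ) (w ⟨ℓ,h⟩)) (fun h => g (j ℓ) (i' ⟨ℓ,h⟩)) := by
    intro ℓ; by_cases h : ℓ ∈ F <;> simp [h]
  simp only [h1]
  rw [Fintype.prod_dite]
  congr!

theorem stmt11 (n k : ℕ) [NeZero k] (hk : 2 ≤ k)
    (C Csub : Submodule (ZMod 2) (Fin n → ZMod 2))
    (hC1 : allOnes n ∈ C) (hCk : Module.finrank (ZMod 2) C = k)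
    (hsub : Csub ≤ C) (hsubdim : Module.finrank (ZMod 2) Csub = k - 1)
    (hsub1 : allOnes n ∉ Csub)
    (g : Fin k → Fin n → ZMod 2) (hg0 : g 0 = allOnes n)
    (hgsub : ∀ i, i ≠ 0 → g i ∈ Csub)
    (hgind : LinearIndependent (ZMod 2) (fun i : {i : Fin k // i ≠ 0} => g i.1))
    (m r : ℕ) (hr : r ≤ m)
    (F : Finset (Fin m))
    (u v : {ℓ : Fin m // ℓ ∈ F} → Fin n) (huv : u ≠ v)
    (hrf : r - 1 ≤ m - F.card)
    (c : (Fin m → Fin n) → ZMod 2) (hc : c ∈ subprod n k r (Fin m) g) :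
    (fun i' : {ℓ : Fin m // ℓ ∉ F} → Fin n =>
        c (fun ℓ => if h : ℓ ∈ F then u ⟨ℓ, h⟩ else i' ⟨ℓ, h⟩) +
        c (fun ℓ => if h : ℓ ∈ F then v ⟨ℓ, h⟩ else i' ⟨ℓ, h⟩))
      ∈ subprod n k (r - 1) {ℓ : Fin m // ℓ ∉ F} g := by
  induction hc using Submodule.span_induction with
  | mem x hx =>
    obtain ⟨j, hj, rfl⟩ := hx
    have key : ∀ i' : {ℓ : Fin m // ℓ ∉ F} → Fin n,
        bvec g j (fun ℓ => if h : ℓ ∈ F then u ⟨ℓ, h⟩ else i' ⟨ℓ, h⟩) +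
        bvec g j (fun ℓ => if h : ℓ ∈ F then v ⟨ℓ, h⟩ else i' ⟨ℓ, h⟩) =
        ((∏ ℓ : {ℓ : Fin m // ℓ ∈ F}, g (j ℓ.1) (u ℓ)) +
         (∏ ℓ : {ℓ : Fin m // ℓ ∈ F}, g (j ℓ.1) (v ℓ))) *
          bvec g (fun ℓ : {ℓ : Fin m // ℓ ∉ F} => j ℓ.1) i' := by
      intro i'
      rw [bvec_split, bvec_split, add_mul]
    by_cases h0 : ∀ ℓ : Fin m, ℓ ∈ F → j ℓ = 0
    · have hz : ((∏ ℓ : {ℓ : Fin m // ℓ ∈ F}, g (j ℓ.1) (u ℓ)) +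
         (∏ ℓ : {ℓ : Fin m // ℓ ∈ F}, g (j ℓ.1) (v ℓ))) = 0 := by
        have hu : (∏ ℓ : {ℓ : Fin m // ℓ ∈ F}, g (j ℓ.1) (u ℓ)) = 1 := by
          apply Finset.prod_eq_one
          intro ℓ _
          rw [h0 ℓ.1 ℓ.2, hg0]; rfl
        have hv : (∏ ℓ : {ℓ : Fin m // ℓ ∈ F}, g (j ℓ.1) (v ℓ)) = 1 := by
          apply Finset.prod_eq_one
          intro ℓ _
          rw [h0 ℓ.1 ℓ.2, hg0]; rfl
        rw [hu, hv]; decide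
      have : (fun i' : {ℓ : Fin m // ℓ ∉ F} → Fin n =>
          bvec g j (fun ℓ => if h : ℓ ∈ F then u ⟨ℓ, h⟩ else i' ⟨ℓ, h⟩) +
          bvec g j (fun ℓ => if h : ℓ ∈ F then v ⟨ℓ, h⟩ else i' ⟨ℓ, h⟩)) = 0 := by
        funext i'; rw [key i', hz, zero_mul]; rfl
      rw [this]
      exact zero_mem _
    · push_neg at h0
      obtain ⟨ℓ₀, hℓ₀F, hℓ₀⟩ := h0
      have hwt : (Finset.univ.filter fun ℓ : {ℓ : Fin m // ℓ ∉ F} => j ℓ.1 ≠ 0).card ≤ r - 1 := by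
        have hmem : ℓ₀ ∈ Finset.univ.filter (fun ℓ : Fin m => j ℓ ≠ 0) := by
          simp [hℓ₀]
        have hsubset : (Finset.univ.filter fun ℓ : {ℓ : Fin m // ℓ ∉ F} => j ℓ.1 ≠ 0).card ≤
            ((Finset.univ.filter (fun ℓ : Fin m => j ℓ ≠ 0)).erase ℓ₀).card := by
          apply Finset.card_le_card_of_injOn Subtype.val
          · intro a ha
            simp only [Finset.mem_coe, Finset.mem_filter, Finset.mem_univ, true_and] at ha ⊢
            apply Finset.mem_erase.2
            constructor
            · intro h; exact a.2 (h ▸ hℓ₀F)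
            · simp [ha]
          · intro a _ b _ hab; exact Subtype.ext hab
        calc (Finset.univ.filter fun ℓ : {ℓ : Fin m // ℓ ∉ F} => j ℓ.1 ≠ 0).card
            ≤ ((Finset.univ.filter (fun ℓ : Fin m => j ℓ ≠ 0)).erase ℓ₀).card := hsubset
          _ = (Finset.univ.filter (fun ℓ : Fin m => j ℓ ≠ 0)).card - 1 :=
              Finset.card_erase_of_mem hmem
          _ ≤ r - 1 := Nat.sub_le_sub_right hj 1
      have hb : bvec g (fun ℓ : {ℓ : Fin m // ℓ ∉ F} => j ℓ.1) ∈
          subprod n k (r - 1) {ℓ : Fin m // ℓ ∉ F} g :=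
        Submodule.subset_span ⟨_, hwt, rfl⟩
      have : (fun i' : {ℓ : Fin m // ℓ ∉ F} → Fin n =>
          bvec g j (fun ℓ => if h : ℓ ∈ F then u ⟨ℓ, h⟩ else i' ⟨ℓ, h⟩) +
          bvec g j (fun ℓ => if h : ℓ ∈ F then v ⟨ℓ, h⟩ else i' ⟨ℓ, h⟩)) =
          ((∏ ℓ : {ℓ : Fin m // ℓ ∈ F}, g (j ℓ.1) (u ℓ)) +
           (∏ ℓ : {ℓ : Fin m // ℓ ∈ F}, g (j ℓ.1) (v ℓ))) •
            bvec g (fun ℓ : {ℓ : Fin m // ℓ ∉ F} => j ℓ.1) := by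
        funext i'; rw [key i']; rfl
      rw [this]
      exact Submodule.smul_mem _ _ hb
  | zero => convert zero_mem (subprod n k (r - 1) {ℓ : Fin m // ℓ ∉ F} g) using 1; funext i'; simp
  | add x y hx hy ihx ihy =>
    have : (fun i' : {ℓ : Fin m // ℓ ∉ F} → Fin n =>
        (x + y) (fun ℓ => if h : ℓ ∈ F then u ⟨ℓ, h⟩ else i' ⟨ℓ, h⟩) +
        (x + y) (fun ℓ => if h : ℓ ∈ F then v ⟨ℓ, h⟩ else i' ⟨ℓ, h⟩)) =
        (fun i' : {ℓ : Fin m // ℓ ∉ F} → Fin n =>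
          x (fun ℓ => if h : ℓ ∈ F then u ⟨ℓ, h⟩ else i' ⟨ℓ, h⟩) +
          x (fun ℓ => if h : ℓ ∈ F then v ⟨ℓ, h⟩ else i' ⟨ℓ, h⟩)) +
        (fun i' : {ℓ : Fin m // ℓ ∉ F} → Fin n =>
          y (fun ℓ => if h : ℓ ∈ F then u ⟨ℓ, h⟩ else i' ⟨ℓ, h⟩) +
          y (fun ℓ => if h : ℓ ∈ F then v ⟨ℓ, h⟩ else i' ⟨ℓ, h⟩)) := by
      funext i'; simp [Pi.add_apply]; ring
    rw [this]
    exact add_mem ihx ihy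
  | smul a x hx ihx =>
    have : (fun i' : {ℓ : Fin m // ℓ ∉ F} → Fin n =>
        (a • x) (fun ℓ => if h : ℓ ∈ F then u ⟨ℓ, h⟩ else i' ⟨ℓ, h⟩) +
        (a • x) (fun ℓ => if h : ℓ ∈ F then v ⟨ℓ, h⟩ else i' ⟨ℓ, h⟩)) =
        a • (fun i' : {ℓ : Fin m // ℓ ∉ F} → Fin n =>
          x (fun ℓ => if h : ℓ ∈ F then u ⟨ℓ, h⟩ else i' ⟨ℓ, h⟩) +
          x (fun ℓ => if h : ℓ ∈ F then v ⟨ℓ, h⟩ else i' ⟨ℓ, h⟩)) := by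
      funext i'; simp [Pi.smul_apply, smul_eq_mul]; ring
    rw [this]
    exact Submodule.smul_mem _ _ ihx
end
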